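/- arXiv:1801.01482 — 9 statements merged into one kernel-verified Lean document; each statement's English description precedes it below -/
import Mathlib

section
/- For every finite meet-semilattice S, the quotient semilattice S/Θ by the tree congruence Θ is a tree semilattice, i.e., no two incomparable elements of S/Θ have a common upper bound. -/
/-
Write `x ~ y` for the tree congruence. For a class-level upper bound `c` of `a` and `b`, the elements
`a' = a ⊓ c ~ a` and `b' = b ⊓ c ~ b` lie below `c` in `S` itself. If they are incomparable,
then (both being nonzero) their join `v` exists by finiteness and `a' ⊓ b' ~ v` is a generating
pair; meeting it with `a'` gives `a' ⊓ b' ~ a'`. So in every case the class of `a ⊓ b ~ a' ⊓ b'`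
is that of `a'` or of `b'`, i.e. the classes of `a` and `b` are comparable.
-/

def IsMeetCong {α : Type*} [SemilatticeInf α] (s : Setoid α) : Prop :=
  ∀ a b c d : α, s.r a b → s.r c d → s.r (a ⊓ c) (b ⊓ d)

noncomputable def numCong (α : Type*) [SemilatticeInf α] : ℕ :=
  Nat.card {s : Setoid α // IsMeetCong s}

def IsUbta {α : Type*} [SemilatticeInf α] [OrderBot α] (x y : α) : Prop :=
  x ≠ ⊥ ∧ y ≠ ⊥ ∧ ¬ x ≤ y ∧ ¬ y ≤ x ∧ ∃ z, x ≤ z ∧ y ≤ z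

def treeCong (α : Type*) [SemilatticeInf α] [OrderBot α] : Setoid α :=
  sInf {s : Setoid α | IsMeetCong s ∧
    ∀ a b v : α, IsUbta a b → IsLUB {a, b} v → s.r (a ⊓ b) v}

def IsNucleus {α : Type*} [SemilatticeInf α] [OrderBot α] (X : Set α) : Prop :=
  (∃ x ∈ X, ∃ y ∈ X, x ≠ y) ∧
  (∀ x ∈ X, ∀ y, y ∈ X ↔ (treeCong α).r x y) ∧
  (∀ a b : α, (treeCong α).r a b → a ≠ b → a ∈ X)

def IsQuasiTree (α : Type*) [SemilatticeInf α] [OrderBot α] : Prop :=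
  ∃ X : Set α, IsNucleus X

lemma BddAbove.exists_isLUB {α : Type*} [SemilatticeInf α] [Finite α] {s : Set α}
    (hs : BddAbove s) : ∃ v, IsLUB s v := by
  obtain ⟨z, hz⟩ := hs
  have hne : (Set.toFinite (upperBounds s)).toFinset.Nonempty := ⟨z, by simpa using hz⟩
  refine ⟨(Set.toFinite (upperBounds s)).toFinset.inf' hne id, isGLB_upperBounds.mp ?_⟩
  simpa using Finset.isGLB_inf' hne

lemma IsMeetCong.inf_right {α : Type*} [SemilatticeInf α] {s : Setoid α} (hs : IsMeetCong s)
    {x y : α} (h : s.r x y) (z : α) : s.r (x ⊓ z) (y ⊓ z) :=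
  hs x y z z h (s.refl' z)

section TreeCong

variable {α : Type*} [SemilatticeInf α] [OrderBot α]

lemma isMeetCong_treeCong : IsMeetCong (treeCong α) := fun a b c d hab hcd _ hs =>
  hs.1 a b c d (hab _ hs) (hcd _ hs)

lemma treeCong_inf_sup {a b v : α} (h : IsUbta a b) (hv : IsLUB {a, b} v) :
    (treeCong α).r (a ⊓ b) v := fun _ hs => hs.2 a b v h hv

lemma treeCong_inf_left_of_isUbta {a b v : α} (h : IsUbta a b) (hv : IsLUB {a, b} v) :
    (treeCong α).r (a ⊓ b) a := by
  have := isMeetCong_treeCong.inf_right (treeCong_inf_sup h hv) a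
  rwa [inf_of_le_left inf_le_left, inf_of_le_right (hv.1 (Set.mem_insert a _))] at this

lemma treeCong_inf_left_or_right_of_le [Finite α] {a b z : α} (ha : a ≤ z) (hb : b ≤ z) :
    (treeCong α).r (a ⊓ b) a ∨ (treeCong α).r (a ⊓ b) b := by
  by_cases hab : a ≤ b
  · exact .inl (by rw [inf_of_le_left hab])
  by_cases hba : b ≤ a
  · exact .inr (by rw [inf_of_le_right hba])
  have hbdd : BddAbove ({a, b} : Set α) := ⟨z, by simp [upperBounds, ha, hb]⟩
  obtain ⟨v, hv⟩ := hbdd.exists_isLUB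
  have hubta : IsUbta a b :=
    ⟨fun h => hab (h ▸ bot_le), fun h => hba (h ▸ bot_le), hab, hba, z, ha, hb⟩
  exact .inl (treeCong_inf_left_of_isUbta hubta hv)

end TreeCong

/-- The class of `x` lies below the class of `y` in the quotient iff `(x ⊓ y, x)` belongs to the
tree congruence. -/
theorem quotient_by_treeCong_is_tree {α : Type*} [SemilatticeInf α] [OrderBot α]
    [Fintype α] :
    ∀ a b c : α, (treeCong α).r (a ⊓ c) a → (treeCong α).r (b ⊓ c) b →
      (treeCong α).r (a ⊓ b) a ∨ (treeCong α).r (a ⊓ b) b := by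
  intro a b c ha hb
  have hmeet : (treeCong α).r (a ⊓ b) ((a ⊓ c) ⊓ (b ⊓ c)) :=
    (treeCong α).symm' (isMeetCong_treeCong _ _ _ _ ha hb)
  rcases treeCong_inf_left_or_right_of_le (inf_le_right : a ⊓ c ≤ c) inf_le_right with h | h
  · exact .inl ((treeCong α).trans' ((treeCong α).trans' hmeet h) ha)
  · exact .inr ((treeCong α).trans' ((treeCong α).trans' hmeet h) hb)
end

section
/- Let X be a nontrivial convex subsemilattice of a finite meet-semilattice S with least element u = ⋀X. Then the equivalence relation on S whose only nonsingleton block is X is a congruence of S if and only if for every c ∈ S with c not ≥ u and every maximal element v of X, one has u ∧ c = v ∧ c. -/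
section

variable {α : Type*} [SemilatticeInf α]

theorem isMeetCong_iff_inf_right {s : Setoid α} :
    IsMeetCong s ↔ ∀ a b c : α, s.r a b → s.r (a ⊓ c) (b ⊓ c) := by
  refine ⟨fun h a b c hab => h a b c c hab (s.refl c), fun h a b c d hab hcd => ?_⟩
  have hcd' : s.r (b ⊓ c) (b ⊓ d) := by simpa only [inf_comm b] using h c d b hcd
  exact s.trans (h a b c hab) hcd'

theorem inf_eq_inf_of_forall_maximal {X : Set α} (hX : X.Finite) {u c x : α}
    (hu : ∀ x ∈ X, u ≤ x)
    (H : ∀ v ∈ X, (∀ w ∈ X, v ≤ w → w = v) → u ⊓ c = v ⊓ c) (hx : x ∈ X) :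
    x ⊓ c = u ⊓ c := by
  obtain ⟨v, hxv, hvX, hvmax⟩ := hX.exists_le_maximal hx
  have huv : u ⊓ c = v ⊓ c :=
    H v hvX fun w hw hvw => le_antisymm (hvmax hw hvw) hvw
  exact le_antisymm (huv ▸ inf_le_inf_right c hxv) (inf_le_inf_right c (hu x hx))

end

theorem singleBlock_cong_iff_general {α : Type*} [SemilatticeInf α] [Fintype α]
    (X : Set α)
    (hconv : ∀ x ∈ X, ∀ z ∈ X, ∀ y : α, x ≤ y → y ≤ z → y ∈ X)
    (u : α) (huX : u ∈ X) (hu : ∀ x ∈ X, u ≤ x)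
    (s : Setoid α) (hs : ∀ x y : α, s.r x y ↔ (x = y ∨ (x ∈ X ∧ y ∈ X))) :
    IsMeetCong s ↔
      ∀ c : α, ¬ u ≤ c → ∀ v ∈ X, (∀ w ∈ X, v ≤ w → w = v) → u ⊓ c = v ⊓ c := by
  constructor
  · intro h c huc v hv _
    rcases (hs _ _).1 (h u v c c ((hs u v).2 (.inr ⟨huX, hv⟩)) (s.refl c)) with heq | ⟨hucX, -⟩
    · exact heq
    · exact absurd ((hu _ hucX).trans inf_le_right) huc
  · intro H
    refine isMeetCong_iff_inf_right.2 fun a b c hab => ?_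
    rcases (hs a b).1 hab with rfl | ⟨ha, hb⟩
    · exact s.refl _
    by_cases huc : u ≤ c
    · have hinf_mem : ∀ x ∈ X, x ⊓ c ∈ X := fun x hx =>
        hconv u huX x hx _ (le_inf (hu x hx) huc) inf_le_left
      exact (hs _ _).2 (.inr ⟨hinf_mem a ha, hinf_mem b hb⟩)
    · have hinf_eq : ∀ x ∈ X, x ⊓ c = u ⊓ c := fun x hx =>
        inf_eq_inf_of_forall_maximal X.toFinite hu (H c huc) hx
      exact (hs _ _).2 (.inl ((hinf_eq a ha).trans (hinf_eq b hb).symm))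

/-- The equivalence whose only nonsingleton block is a nontrivial convex
subsemilattice X with least element u is a congruence iff u ⊓ c = v ⊓ c for
all c not above u and all maximal v ∈ X. -/
theorem singleBlock_cong_iff {α : Type*} [SemilatticeInf α] [Fintype α]
    (X : Set α)
    (hmeet : ∀ x ∈ X, ∀ y ∈ X, x ⊓ y ∈ X)
    (hconv : ∀ x ∈ X, ∀ z ∈ X, ∀ y : α, x ≤ y → y ≤ z → y ∈ X)
    (hnontriv : ∃ x ∈ X, ∃ y ∈ X, x ≠ y)
    (u : α) (huX : u ∈ X) (hu : ∀ x ∈ X, u ≤ x)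
    (s : Setoid α) (hs : ∀ x y : α, s.r x y ↔ (x = y ∨ (x ∈ X ∧ y ∈ X))) :
    IsMeetCong s ↔
      ∀ c : α, ¬ u ≤ c → ∀ v ∈ X, (∀ w ∈ X, v ≤ w → w = v) → u ⊓ c = v ⊓ c :=
  singleBlock_cong_iff_general X hconv u huX hu s hs
end

section
/- For every finite meet-semilattice S, the congruence lattice Con(S) is dually isomorphic to the lattice of partial subalgebras of the associated partial join-semilattice on S⁺ = S \ {0}. In particular |Con(S)| equals the number of subsets X of S⁺ such that whenever x, y ∈ X and x ∨ y exists in S⁺, x ∨ y ∈ X. -/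
/-- A partial subalgebra of the partial join-semilattice on S ∖ {⊥}. -/
def IsPartialSub {α : Type*} [SemilatticeInf α] [OrderBot α] (X : Set α) : Prop :=
  (∀ x ∈ X, x ≠ ⊥) ∧
  ∀ x ∈ X, ∀ y ∈ X, ∀ v : α, IsLUB {x, y} v → v ≠ ⊥ → v ∈ X

/-!
Every class of a meet congruence `θ` on a finite meet-semilattice is closed under meets, hence has
a least element. Sending `θ` to its set of nonzero class minima is the dual isomorphism; its inverse
sends `X` to the congruence "`a` and `b` lie above the same elements of `X`". Everything rests on
one observation: if `x` is least in its class and `a θ b` with `x ≤ a`, then `x = x ⊓ a θ x ⊓ b`,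
so `x ≤ x ⊓ b ≤ b`.
-/

section

variable {α : Type*}

def coneSetoid [LE α] (X : Set α) : Setoid α where
  r a b := ∀ x ∈ X, x ≤ a ↔ x ≤ b
  iseqv := ⟨fun _ _ _ => Iff.rfl, fun h x hx => (h x hx).symm,
    fun h h' x hx => (h x hx).trans (h' x hx)⟩

def classMinima [LE α] [OrderBot α] (s : Setoid α) : Set α :=
  {x | x ≠ ⊥ ∧ ∀ u, s.r u x → x ≤ u}

section SemilatticeInf

variable [SemilatticeInf α]

lemma InfClosed.exists_isLeast [Finite α] {s : Set α} (hs : InfClosed s) (hne : s.Nonempty) :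
    ∃ m, IsLeast s m := by
  obtain ⟨m, hm⟩ := s.toFinite.exists_minimal hne
  exact ⟨m, hm.1, fun b hb => (hm.2 (hs hm.1 hb) inf_le_left).trans inf_le_right⟩

lemma exists_isLUB_of_bddAbove [Finite α] {B : Set α} (hB : BddAbove B) : ∃ v, IsLUB B v :=
  InfClosed.exists_isLeast (fun _ ha _ hb _ hx => le_inf (ha hx) (hb hx)) hB

lemma isMeetCong_coneSetoid (X : Set α) : IsMeetCong (coneSetoid X) := by
  intro a b c d hab hcd x hx
  simp only [le_inf_iff]
  exact and_congr (hab x hx) (hcd x hx)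

namespace IsMeetCong

variable {s : Setoid α}

lemma exists_isLeast_class [Finite α] (hs : IsMeetCong s) (a : α) :
    ∃ m, IsLeast {u | s.r u a} m :=
  InfClosed.exists_isLeast (fun u hu v hv => by simpa using hs u a v a hu hv) ⟨a, s.refl' a⟩

lemma le_of_rel (hs : IsMeetCong s) {x a b : α} (hx : ∀ u, s.r u x → x ≤ u) (hab : s.r a b)
    (hxa : x ≤ a) : x ≤ b := by
  have hbx : s.r (x ⊓ b) x := by
    simpa [inf_eq_left.2 hxa] using hs x x b a (s.refl' x) (s.symm' hab)
  exact (hx _ hbx).trans inf_le_right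

variable [OrderBot α]

lemma classMinima_isPartialSub (hs : IsMeetCong s) : IsPartialSub (classMinima s) := by
  refine ⟨fun x hx => hx.1, ?_⟩
  rintro x ⟨-, hx⟩ y ⟨-, hy⟩ v hv hv0
  refine ⟨hv0, fun u hu => hv.2 ?_⟩
  rintro z (rfl | rfl)
  · exact hs.le_of_rel hx (s.symm' hu) (hv.1 (by simp))
  · exact hs.le_of_rel hy (s.symm' hu) (hv.1 (by simp))

lemma rel_iff [Finite α] (hs : IsMeetCong s) {a b : α} :
    s.r a b ↔ (coneSetoid (classMinima s)).r a b := by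
  refine ⟨fun hab x hx => ⟨hs.le_of_rel hx.2 hab, hs.le_of_rel hx.2 (s.symm' hab)⟩, fun h => ?_⟩
  obtain ⟨ma, hma⟩ := hs.exists_isLeast_class a
  obtain ⟨mb, hmb⟩ := hs.exists_isLeast_class b
  have least_le : ∀ {a b m m'}, (coneSetoid (classMinima s)).r a b → IsLeast {u | s.r u a} m →
      IsLeast {u | s.r u b} m' → m ≠ ⊥ → m ≤ m' := by
    intro a b m m' h hm hm' hm0
    have hmin : m ∈ classMinima s := ⟨hm0, fun u hu => hm.2 (s.trans' hu hm.1)⟩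
    exact hs.le_of_rel hmin.2 (s.symm' hm'.1) ((h m hmin).1 (hm.2 (s.refl' a)))
  have hab : ma ≠ ⊥ → ma ≤ mb := least_le h hma hmb
  have hba : mb ≠ ⊥ → mb ≤ ma := least_le ((coneSetoid _).symm' h) hmb hma
  have heq : ma = mb := by
    by_cases ha : ma = ⊥ <;> by_cases hb : mb = ⊥
    · rw [ha, hb]
    · exact absurd (le_bot_iff.1 (ha ▸ hba hb)) hb
    · exact absurd (le_bot_iff.1 (hb ▸ hab ha)) ha
    · exact le_antisymm (hab ha) (hba hb)
  exact s.trans' (s.symm' hma.1) (heq ▸ hmb.1)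

lemma coneSetoid_classMinima [Finite α] (hs : IsMeetCong s) :
    coneSetoid (classMinima s) = s :=
  Setoid.ext fun _ _ => hs.rel_iff.symm

end IsMeetCong

lemma classMinima_subset_classMinima_iff [OrderBot α] [Finite α] {s t : Setoid α}
    (hs : IsMeetCong s) (ht : IsMeetCong t) : classMinima t ⊆ classMinima s ↔ s ≤ t := by
  refine ⟨fun hsub a b hab => ht.rel_iff.2 fun x hx => hs.rel_iff.1 hab x (hsub hx), ?_⟩
  rintro hle x ⟨hx0, hx⟩
  exact ⟨hx0, fun u hu => hx u (hle hu)⟩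

lemma IsPartialSub.classMinima_coneSetoid [OrderBot α] [Finite α] {X : Set α}
    (hX : IsPartialSub X) : classMinima (coneSetoid X) = X := by
  ext z
  refine ⟨fun ⟨hz0, hzmin⟩ => ?_, fun hz => ⟨hX.1 z hz, fun u hu => (hu z hz).2 le_rfl⟩⟩
  have hne : (X ∩ Set.Iic z).Nonempty := by
    by_contra! hempty
    refine hz0 (le_bot_iff.1 (hzmin ⊥ fun x hx => ⟨fun h => absurd (le_bot_iff.1 h) (hX.1 x hx),
      fun h => (hempty.subset ⟨hx, h⟩).elim⟩))
  obtain ⟨v, ⟨hvX, hvz⟩, hvmax⟩ := (X ∩ Set.Iic z).toFinite.exists_maximal hne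
  -- `v ∨ x` lies in `X ∩ Iic z` for every `x ∈ X ∩ Iic z`, so maximality puts `x` below `v`.
  have hvz_rel : (coneSetoid X).r v z := by
    refine fun x hx => ⟨fun hxv => hxv.trans hvz, fun hxz => ?_⟩
    have hz : z ∈ upperBounds {x, v} := by rintro _ (rfl | rfl) <;> assumption
    obtain ⟨w, hw⟩ := exists_isLUB_of_bddAbove ⟨z, hz⟩
    have hvw : v ≤ w := hw.1 (by simp)
    have hwX : w ∈ X := hX.2 x hx v hvX w hw (ne_bot_of_le_ne_bot (hX.1 v hvX) hvw)
    exact (hw.1 (by simp)).trans (hvmax ⟨hwX, hw.2 hz⟩ hvw)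
  rwa [le_antisymm (hzmin v hvz_rel) hvz]

end SemilatticeInf

def meetCongEquivPartialSub [SemilatticeInf α] [OrderBot α] [Finite α] :
    {s : Setoid α // IsMeetCong s} ≃ {X : Set α // IsPartialSub X} where
  toFun s := ⟨classMinima s.1, s.2.classMinima_isPartialSub⟩
  invFun X := ⟨coneSetoid X.1, isMeetCong_coneSetoid X.1⟩
  left_inv s := Subtype.ext s.2.coneSetoid_classMinima
  right_inv X := Subtype.ext X.2.classMinima_coneSetoid

end

/-- Freese–Nation: Con(S) is dually isomorphic to the lattice of partial
subalgebras of the associated partial join-semilattice; in particular the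
cardinalities agree. -/
theorem freese_nation {α : Type*} [SemilatticeInf α] [OrderBot α] [Fintype α] :
    (∃ e : {s : Setoid α // IsMeetCong s} ≃ {X : Set α // IsPartialSub X},
      ∀ s t : {s : Setoid α // IsMeetCong s},
        s.1 ≤ t.1 ↔ (e t).1 ⊆ (e s).1) ∧
    numCong α = Nat.card {X : Set α // IsPartialSub X} :=
  ⟨⟨meetCongEquivPartialSub, fun s t => (classMinima_subset_classMinima_iff s.2 t.2).symm⟩,
    Nat.card_congr meetCongEquivPartialSub⟩
end

section
/- An n-element finite meet-semilattice S (n ≥ 2) has at most 2^{n-1} congruences, and |Con(S)| = 2^{n-1} if and only if S is a tree semilattice (no two incomparable elements have a common upper bound). -/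
open Set Function

def IsTreeSemilattice (α : Type*) [LE α] : Prop :=
  ∀ a b : α, (∃ c, a ≤ c ∧ b ≤ c) → a ≤ b ∨ b ≤ a

theorem IsTreeSemilattice.subtype {α : Type*} [LE α] {p : α → Prop} (h : IsTreeSemilattice α) :
    IsTreeSemilattice {x // p x} :=
  fun a b ⟨c, hac, hbc⟩ => h a b ⟨c, hac, hbc⟩

abbrev MeetCon (α : Type*) [SemilatticeInf α] : Type _ := {s : Setoid α // IsMeetCong s}

section Congruences

variable {α β : Type*} [SemilatticeInf α] [SemilatticeInf β]

theorem isMeetCong_bot : IsMeetCong (⊥ : Setoid α) := by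
  intro a b c d hab hcd
  rw [Setoid.bot_def] at *
  rw [hab, hcd]

theorem IsMeetCong.inf {s t : Setoid α} (hs : IsMeetCong s) (ht : IsMeetCong t) :
    IsMeetCong (s ⊓ t) :=
  fun a b c d hab hcd => ⟨hs a b c d hab.1 hcd.1, ht a b c d hab.2 hcd.2⟩

theorem IsMeetCong.comap {s : Setoid α} (hs : IsMeetCong s) {f : β → α}
    (hf : ∀ x y, f (x ⊓ y) = f x ⊓ f y) : IsMeetCong (s.comap f) := by
  intro a b c d hab hcd
  change s (f (a ⊓ c)) (f (b ⊓ d))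
  rw [hf, hf]
  exact hs _ _ _ _ hab hcd

theorem isMeetCong_ker {f : α → β} (hf : ∀ x y, f (x ⊓ y) = f x ⊓ f y) :
    IsMeetCong (Setoid.ker f) := by
  intro a b c d hab hcd
  change f (a ⊓ c) = f (b ⊓ d)
  rw [hf, hf, hab, hcd]

theorem numCong_eq_one_of_subsingleton [Subsingleton α] : numCong α = 1 :=
  have : Nonempty (MeetCon α) := ⟨⟨⊥, isMeetCong_bot⟩⟩
  have : Subsingleton (MeetCon α) := ⟨fun s t => Subtype.ext <| Setoid.ext fun x y => by
    rw [Subsingleton.elim x y]; exact iff_of_true (s.1.refl' y) (t.1.refl' y)⟩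
  Nat.card_unique

end Congruences

theorem Nat.card_prod_prop (β : Type*) : Nat.card (β × Prop) = 2 * Nat.card β := by
  rw [Nat.card_prod, Nat.card_eq_fintype_card (α := Prop), Fintype.card_prop, mul_comm]

instance Setoid.finite {α : Type*} [Finite α] : Finite (Setoid α) :=
  Finite.of_injective (fun s : Setoid α => ⇑s) fun _ _ => Setoid.eq_iff_rel_eq.2

section EraseMax

variable {α : Type*} [SemilatticeInf α] {m : α}

theorem IsMax.inf_ne_left (hm : IsMax m) {x : α} (y : α) (hx : x ≠ m) : x ⊓ y ≠ m :=
  fun h => hx (le_antisymm (hm (h ▸ inf_le_left)) (h ▸ inf_le_left))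

theorem IsMax.inf_ne_right (hm : IsMax m) (x : α) {y : α} (hy : y ≠ m) : x ⊓ y ≠ m :=
  inf_comm y x ▸ hm.inf_ne_left x hy

theorem IsMax.inf_eq_iff (hm : IsMax m) {x y : α} : x ⊓ y = m ↔ x = m ∧ y = m := by
  refine ⟨fun h => ⟨?_, ?_⟩, fun ⟨hx, hy⟩ => by rw [hx, hy, inf_idem]⟩
  · by_contra hx; exact hm.inf_ne_left y hx h
  · by_contra hy; exact hm.inf_ne_right x hy h

theorem IsGreatest.inf_max_eq (hm : IsMax m) {a : α} (ha : IsGreatest (Iio m) a) {y : α}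
    (hy : y ≠ m) : m ⊓ y = a ⊓ y :=
  le_antisymm (le_inf (ha.2 (lt_of_le_of_ne inf_le_left (hm.inf_ne_right m hy))) inf_le_right)
    (inf_le_inf_right y ha.1.le)

theorem IsTreeSemilattice.exists_isGreatest_Iio [Finite α] [Nontrivial α]
    (h : IsTreeSemilattice α) (hm : IsMax m) : ∃ a, IsGreatest (Iio m) a := by
  obtain ⟨x, hx⟩ := exists_ne m
  have hne : (Iio m).Nonempty := ⟨x ⊓ m, lt_of_le_of_ne inf_le_right (hm.inf_ne_left m hx)⟩
  obtain ⟨a, ha⟩ := (toFinite _).exists_maximal hne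
  refine ⟨a, ha.1, fun y hy => ?_⟩
  exact (h y a ⟨m, le_of_lt hy, le_of_lt ha.1⟩).elim id (ha.2 hy)

theorem IsMeetCong.rel_max_of_rel_max (hm : IsMax m) {θ₁ θ₂ : Setoid α}
    (h₁ : IsMeetCong θ₁) (h₂ : IsMeetCong θ₂)
    (hθ : ∀ x y, x ≠ m → y ≠ m → θ₁ x y → θ₂ x y) {a b : α} (ha : a ≠ m) (hb : b ≠ m)
    (hma : θ₁ m a) (hmb : θ₂ m b) : θ₂ m a := by
  have h1 : θ₂ m (b ⊓ m) := by simpa using h₂ _ _ _ _ hmb (θ₂.refl' m)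
  have h2 : θ₂ (b ⊓ m) (b ⊓ a) :=
    hθ _ _ (hm.inf_ne_left m hb) (hm.inf_ne_left a hb) (h₁ _ _ _ _ (θ₁.refl' b) hma)
  have h3 : θ₂ (b ⊓ a) (m ⊓ a) := h₂ _ _ _ _ (θ₂.symm' hmb) (θ₂.refl' a)
  have h4 : θ₂ (m ⊓ a) a := by
    have := h₁ _ _ _ _ hma (θ₁.refl' a)
    rw [inf_idem] at this
    exact hθ _ _ (hm.inf_ne_right m ha) ha this
  exact θ₂.trans' (θ₂.trans' (θ₂.trans' h1 h2) h3) h4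

instance [Fact (IsMax m)] : SemilatticeInf {x // x ≠ m} :=
  Subtype.semilatticeInf fun _ y hx _ => (Fact.out : IsMax m).inf_ne_left y hx

variable [Fact (IsMax m)]

variable (m) in
def MeetCon.restrictAndFlag (θ : MeetCon α) : MeetCon {x // x ≠ m} × Prop :=
  (⟨θ.1.comap Subtype.val, θ.2.comap fun _ _ => rfl⟩, ∃ c ≠ m, θ.1 m c)

theorem MeetCon.restrictAndFlag_injective : Injective (restrictAndFlag m (α := α)) := by
  intro θ₁ θ₂ h
  simp only [restrictAndFlag, Prod.mk.injEq, Subtype.mk.injEq, Setoid.ext_iff] at h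
  obtain ⟨hres, hflag⟩ := h
  have hθ : ∀ x y, x ≠ m → y ≠ m → (θ₁.1 x y ↔ θ₂.1 x y) := fun x y hx hy => hres ⟨x, hx⟩ ⟨y, hy⟩
  have hm : IsMax m := Fact.out
  have hclass : ∀ x ≠ m, θ₁.1 m x ↔ θ₂.1 m x := by
    intro x hx
    constructor
    · intro h
      obtain ⟨b, hb, hmb⟩ := hflag.mp ⟨x, hx, h⟩
      exact θ₁.2.rel_max_of_rel_max hm θ₂.2 (fun x y hx hy => (hθ x y hx hy).1) hx hb h hmb
    · intro h
      obtain ⟨b, hb, hmb⟩ := hflag.mpr ⟨x, hx, h⟩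
      exact θ₂.2.rel_max_of_rel_max hm θ₁.2 (fun x y hx hy => (hθ x y hx hy).2) hx hb h hmb
  refine Subtype.ext (Setoid.ext fun x y => ?_)
  rcases eq_or_ne x m with hx | hx <;> rcases eq_or_ne y m with hy | hy
  · rw [hx, hy]; exact iff_of_true (θ₁.1.refl' _) (θ₂.1.refl' _)
  · rw [hx]; exact hclass y hy
  · rw [hy, θ₁.1.comm', θ₂.1.comm']; exact hclass x hx
  · exact hθ x y hx hy

theorem IsGreatest.exists_retraction {a : α} (ha : IsGreatest (Iio m) a) :
    ∃ g : α → {x // x ≠ m}, (∀ x y, g (x ⊓ y) = g x ⊓ g y) ∧ (∀ x : {x // x ≠ m}, g x = x) ∧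
      g m = ⟨a, ha.1.ne⟩ := by
  classical
  have hm : IsMax m := Fact.out
  let g : α → {x // x ≠ m} := fun x =>
    ⟨if x = m then a else x, by split_ifs with h; exacts [ha.1.ne, h]⟩
  refine ⟨g, fun x y => Subtype.ext ?_, fun x => Subtype.ext (if_neg x.2), Subtype.ext (if_pos rfl)⟩
  change (if x ⊓ y = m then a else x ⊓ y) = (if x = m then a else x) ⊓ (if y = m then a else y)
  by_cases hx : x = m <;> by_cases hy : y = m
  · simp [hx, hy]
  · rw [if_pos hx, if_neg hy, hx, if_neg (hm.inf_ne_right m hy), ha.inf_max_eq hm hy]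
  · rw [if_neg hx, if_pos hy, hy, if_neg (hm.inf_ne_left m hx), inf_comm x, inf_comm x,
      ha.inf_max_eq hm hx]
  · simp [hx, hy, hm.inf_ne_left y hx]

theorem MeetCon.restrictAndFlag_surjective_of_isGreatest {a : α} (ha : IsGreatest (Iio m) a) :
    Surjective (restrictAndFlag m (α := α)) := by
  have hm : IsMax m := Fact.out
  obtain ⟨g, hg, hgid, hgm⟩ := ha.exists_retraction
  have hrestrict (t : Setoid {x // x ≠ m}) : (t.comap g).comap Subtype.val = t :=
    Setoid.ext fun x y => by simp only [Setoid.comap_rel, hgid]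
  rintro ⟨t, p⟩
  by_cases hp : p
  · refine ⟨⟨t.1.comap g, t.2.comap hg⟩, Prod.ext (Subtype.ext (hrestrict t.1)) ?_⟩
    refine propext (iff_of_true ⟨a, ha.1.ne, ?_⟩ hp)
    rw [Setoid.comap_rel, hgm, ← hgid ⟨a, ha.1.ne⟩]
  · have hker : IsMeetCong (Setoid.ker (· = m)) :=
      isMeetCong_ker fun x y => propext hm.inf_eq_iff
    refine ⟨⟨t.1.comap g ⊓ Setoid.ker (· = m), (t.2.comap hg).inf hker⟩,
      Prod.ext (Subtype.ext (Setoid.ext fun x y => ?_)) (propext (iff_of_false ?_ hp))⟩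
    · change (t.1.comap g ⊓ Setoid.ker (· = m)) x y ↔ t.1 x y
      simp [Setoid.inf_iff_and, Setoid.ker_def, Setoid.comap_rel, hgid, x.2, y.2]
    · rintro ⟨c, hc, hmc⟩
      exact hc (Setoid.ker_def.1 hmc.2 ▸ rfl : c = m)

theorem MeetCon.exists_isGreatest_of_restrictAndFlag_surjective
    (h : Surjective (restrictAndFlag m (α := α))) : ∃ a, IsGreatest (Iio m) a := by
  have hm : IsMax m := Fact.out
  -- a congruence that is the identity off `m` but identifies `m` with some `c ≠ m`
  obtain ⟨θ, hθ⟩ := h (⟨⊥, isMeetCong_bot⟩, True)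
  simp only [restrictAndFlag, Prod.mk.injEq, Subtype.mk.injEq, eq_iff_iff, iff_true] at hθ
  obtain ⟨hres, c, hc, hmc⟩ := hθ
  have hdiag : ∀ x y, x ≠ m → y ≠ m → θ.1 x y → x = y := fun x y hx hy hxy =>
    congrArg Subtype.val (Setoid.ext_iff.1 hres ⟨x, hx⟩ ⟨y, hy⟩ |>.1 hxy)
  have hma : θ.1 m (m ⊓ c) := by simpa using θ.2 _ _ _ _ (θ.1.refl' m) hmc
  refine ⟨m ⊓ c, lt_of_le_of_ne inf_le_left (hm.inf_ne_right m hc), fun x hx => ?_⟩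
  have hx' : θ.1 x (x ⊓ (m ⊓ c)) := by
    simpa [inf_eq_left.2 hx.le] using θ.2 _ _ _ _ (θ.1.refl' x) hma
  exact inf_eq_left.1 (hdiag _ _ hx.ne (hm.inf_ne_left _ hx.ne) hx').symm

theorem MeetCon.restrictAndFlag_surjective_iff :
    Surjective (restrictAndFlag m (α := α)) ↔ ∃ a, IsGreatest (Iio m) a :=
  ⟨exists_isGreatest_of_restrictAndFlag_surjective,
    fun ⟨_, ha⟩ => restrictAndFlag_surjective_of_isGreatest ha⟩

theorem isTreeSemilattice_of_isGreatest_Iio {a : α} (ht : IsTreeSemilattice {x // x ≠ m})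
    (ha : IsGreatest (Iio m) a) : IsTreeSemilattice α := by
  have hm : IsMax m := Fact.out
  rintro x y ⟨c, hxc, hyc⟩
  by_cases hx : x = m
  · exact Or.inr (hx ▸ hyc.trans (hm (hx ▸ hxc)))
  by_cases hy : y = m
  · exact Or.inl (hy ▸ hxc.trans (hm (hy ▸ hyc)))
  obtain ⟨d, hd, hxd, hyd⟩ : ∃ d ≠ m, x ≤ d ∧ y ≤ d := by
    by_cases hc : c = m
    · exact ⟨a, ha.1.ne, ha.2 (lt_of_le_of_ne (hc ▸ hxc) hx),
        ha.2 (lt_of_le_of_ne (hc ▸ hyc) hy)⟩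
    · exact ⟨c, hc, hxc, hyc⟩
  exact ht ⟨x, hx⟩ ⟨y, hy⟩ ⟨⟨d, hd⟩, hxd, hyd⟩

theorem isTreeSemilattice_iff_of_isMax [Finite α] [Nontrivial α] :
    IsTreeSemilattice α ↔ IsTreeSemilattice {x // x ≠ m} ∧ ∃ a, IsGreatest (Iio m) a :=
  ⟨fun h => ⟨h.subtype, h.exists_isGreatest_Iio Fact.out⟩,
    fun ⟨ht, _, ha⟩ => isTreeSemilattice_of_isGreatest_Iio ht ha⟩

variable [Finite α]

theorem numCong_le_two_mul_numCong_ne_max : numCong α ≤ 2 * numCong {x // x ≠ m} :=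
  Nat.card_prod_prop (MeetCon {x // x ≠ m}) ▸
    Nat.card_le_card_of_injective _ MeetCon.restrictAndFlag_injective

theorem numCong_eq_two_mul_numCong_ne_max_iff :
    numCong α = 2 * numCong {x // x ≠ m} ↔ ∃ a, IsGreatest (Iio m) a := by
  have hinj := MeetCon.restrictAndFlag_injective (α := α) (m := m)
  rw [← MeetCon.restrictAndFlag_surjective_iff, numCong, numCong, ← Nat.card_prod_prop]
  exact ⟨fun h => (hinj.bijective_of_nat_card_le h.ge).2,
    fun h => Nat.card_eq_of_bijective _ ⟨hinj, h⟩⟩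

end EraseMax

theorem numCong_le_and_eq_iff_isTreeSemilattice {α : Type*} [SemilatticeInf α] [Finite α] :
    numCong α ≤ 2 ^ (Nat.card α - 1) ∧
      (numCong α = 2 ^ (Nat.card α - 1) ↔ IsTreeSemilattice α) := by
  induction h : Nat.card α using Nat.strong_induction_on generalizing α with
  | _ n ih =>
  subst h
  rcases subsingleton_or_nontrivial α with hα | hα
  · have hcard : Nat.card α - 1 = 0 := by
      have := Finite.card_le_one_iff_subsingleton.2 hα; omega
    have hone : numCong α = 2 ^ (Nat.card α - 1) := by
      rw [numCong_eq_one_of_subsingleton, hcard, pow_zero]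
    exact ⟨hone.le, iff_of_true hone fun a b _ => Or.inl (Subsingleton.elim a b).le⟩
  obtain ⟨m, hm⟩ : ∃ m : α, IsMax m := by
    obtain ⟨m, -, hm⟩ :=
      Finite.exists_le_maximal (p := fun _ => True) (a := Classical.arbitrary α) ⟨⟩
    exact ⟨m, fun y hy => hm.2 trivial hy⟩
  have : Fact (IsMax m) := ⟨hm⟩
  have hcard : Nat.card {x // x ≠ m} = Nat.card α - 1 := by
    classical
    have := Fintype.ofFinite α
    simp [Nat.card_eq_fintype_card]
  have hcard_gt := Finite.one_lt_card_iff_nontrivial.2 hα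
  obtain ⟨hle, heq⟩ := ih (Nat.card {x // x ≠ m}) (by omega) rfl
  have hpow : 2 ^ (Nat.card α - 1) = 2 * 2 ^ (Nat.card {x // x ≠ m} - 1) := by
    rw [hcard, ← pow_succ']; congr 1; omega
  have hαβ := numCong_le_two_mul_numCong_ne_max (m := m)
  rw [hpow, isTreeSemilattice_iff_of_isMax (m := m), ← heq,
    ← numCong_eq_two_mul_numCong_ne_max_iff]
  exact ⟨by omega, fun h => ⟨by omega, by omega⟩, fun ⟨hdouble, hβ⟩ => by omega⟩

theorem numCong_le_and_tree_general {α : Type*} [SemilatticeInf α] [Fintype α] :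
    numCong α ≤ 2 ^ (Fintype.card α - 1) ∧
    (numCong α = 2 ^ (Fintype.card α - 1) ↔
      ∀ a b : α, (∃ c : α, a ≤ c ∧ b ≤ c) → a ≤ b ∨ b ≤ a) := by
  rw [← Nat.card_eq_fintype_card]
  exact numCong_le_and_eq_iff_isTreeSemilattice

/-- An n-element meet-semilattice has at most 2^(n-1) congruences, with
equality iff it is a tree semilattice. -/
theorem numCong_le_and_tree {α : Type*} [SemilatticeInf α] [Fintype α]
    (hn : 2 ≤ Fintype.card α) :
    numCong α ≤ 2 ^ (Fintype.card α - 1) ∧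
    (numCong α = 2 ^ (Fintype.card α - 1) ↔
      ∀ a b : α, (∃ c : α, a ≤ c ∧ b ≤ c) → a ≤ b ∨ b ≤ a) :=
  numCong_le_and_tree_general
end

section
/- If an n-element finite meet-semilattice S has fewer than 2^{n-1} congruences, then it has at most 28·2^{n-6} congruences. -/
/-!
Delete a maximal element `m` of `S`. Restricting congruences to `S ∖ {m}` is at most two-to-one:
a congruence is determined by its restriction together with whether `{m}` is one of its classes.
Hence `|Con S| ≤ 2 ^ (n - 1)`. If every principal ideal of `S` is a chain (`S` is a tree), then
collapsing each element of an arbitrary set of non-minimal elements with its lower cover gives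
`2 ^ (n - 1)` distinct congruences, so a semilattice with fewer congruences is not a tree.

For a non-tree `S` whose `S ∖ {m}` is a tree, there are incomparable `x, y < m` with `m` as their
only common upper bound, and a congruence in which `m` is not isolated restricts to one that
collapses `x` or `y` with its lower cover. At least `2 ^ (n - 4)` congruences of `S ∖ {m}` do
neither, so `|Con S| ≤ 2 · 2 ^ (n - 2) - 2 ^ (n - 4) = 28 · 2 ^ (n - 6)`. If `S ∖ {m}` is not a
tree either, induction applies to it and the bound at most doubles.
-/

open Set

universe u v

variable {α : Type u} {β : Type v}

abbrev MeetCong (α : Type*) [SemilatticeInf α] := {s : Setoid α // IsMeetCong s}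

namespace MeetCong

variable [SemilatticeInf α] [SemilatticeInf β]

instance [Finite α] : Finite (MeetCong α) :=
  have : Finite (Setoid α) :=
    .of_injective (fun s : Setoid α => ⇑s) fun _ _ => Setoid.eq_iff_rel_eq.2
  Subtype.finite

instance [Subsingleton α] : Subsingleton (MeetCong α) :=
  ⟨fun θ₁ θ₂ => Subtype.ext <| Setoid.ext fun a b => by
    rw [Subsingleton.elim a b]
    exact iff_of_true (θ₁.1.refl' b) (θ₂.1.refl' b)⟩

variable (θ : MeetCong α) {a b c e p : α}

theorem rel_inf_right (h : θ.1 a b) (c : α) : θ.1 (a ⊓ c) (b ⊓ c) :=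
  θ.2 a b c c h (θ.1.refl' c)

theorem rel_of_le_of_le (h : θ.1 a b) (hac : a ≤ c) (hcb : c ≤ b) : θ.1 c b := by
  have hac' : θ.1 a c := by
    simpa only [inf_eq_left.2 hac, inf_eq_right.2 hcb] using θ.rel_inf_right h c
  exact θ.1.trans' (θ.1.symm' hac') h

theorem rel_of_isGreatest_Iio (h : θ.1 c e) (hce : c < e) (hp : IsGreatest (Iio e) p) :
    θ.1 e p :=
  θ.1.symm' (θ.rel_of_le_of_le h (hp.2 hce) (le_of_lt hp.1))

def comap (f : InfHom β α) : MeetCong β :=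
  ⟨θ.1.comap f, fun a b c d h₁ h₂ => by
    simp only [Setoid.comap_rel, map_inf] at *
    exact θ.2 _ _ _ _ h₁ h₂⟩

def Isolates (m : α) : Prop := ∀ a, θ.1 a m → a = m

def SeparatesFromLowerCovers (E : Set α) : Prop :=
  ∀ e ∈ E, ∀ p, IsGreatest (Iio e) p → ¬θ.1 e p

end MeetCong

theorem Nat.card_set [Finite α] : Nat.card (Set α) = 2 ^ Nat.card α := by
  have := Fintype.ofFinite α
  simp only [Nat.card_eq_fintype_card, Fintype.card_set]

theorem Nat.card_subtype_ne_add_one [Finite α] (m : α) :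
    Nat.card {x // x ≠ m} + 1 = Nat.card α := by
  have := ncard_add_ncard_compl ({m} : Set α)
  rw [ncard_singleton] at this
  change Nat.card ↥({m}ᶜ : Set α) + 1 = _
  rw [Nat.card_coe_set_eq]
  omega

theorem Finite.exists_isMax [Preorder α] [Finite α] [Nonempty α] : ∃ m : α, IsMax m := by
  obtain ⟨m, hm⟩ := (univ : Set α).toFinite.exists_maximal univ_nonempty
  exact ⟨m, fun b hb => hm.2 trivial hb⟩

theorem IsMax.inf_ne [SemilatticeInf α] {m x : α} (hm : IsMax m) (hx : x ≠ m) (y : α) :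
    x ⊓ y ≠ m :=
  fun h => hx (hm.eq_of_le (h ▸ inf_le_left)).symm

def IsTree (α : Type*) [Preorder α] : Prop :=
  ∀ ⦃x y z : α⦄, x ≤ z → y ≤ z → x ≤ y ∨ y ≤ x

theorem IsTree.of_subsingleton [Preorder α] [Subsingleton α] : IsTree α :=
  fun x y _ _ _ => Or.inl (Subsingleton.elim x y).le

section TreeRel

variable [SemilatticeInf α] {M : Set α} {x y : α}

/-- On a tree, the meet-congruence generated by collapsing each `z ∈ M` with its lower cover. -/
def treeRel (M : Set α) (x y : α) : Prop :=
  ∀ u, x ⊓ y < u → u ≤ x ∨ u ≤ y → u ∈ M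

theorem treeRel_refl (x : α) : treeRel M x x := by
  intro u hu
  rw [inf_idem] at hu
  rintro (h | h) <;> exact absurd h hu.not_ge

theorem treeRel_symm (h : treeRel M x y) : treeRel M y x := fun u hu hle =>
  h u (inf_comm y x ▸ hu) hle.symm

end TreeRel

namespace IsTree

variable [SemilatticeInf α] (ht : IsTree α) {M : Set α} {x y z c u : α}
include ht

theorem lt_of_not_le (hu : u ≤ z) (hc : c ≤ z) (h : ¬u ≤ c) : c < u :=
  lt_of_le_not_ge ((ht hu hc).resolve_left h) h

theorem exists_isGreatest_Iio [Finite α] (hz : ¬IsMin z) : ∃ p, IsGreatest (Iio z) p := by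
  obtain ⟨p, hp⟩ := (Iio z).toFinite.exists_maximal (not_isMin_iff.1 hz)
  refine ⟨p, hp.1, fun u hu => ?_⟩
  rcases ht (le_of_lt hu) (le_of_lt hp.1) with h | h
  · exact h
  · exact hp.2 hu h

theorem treeRel_trans_of_inf_le {w : α} (hxy : treeRel M x y) (hyw : treeRel M y w)
    (h : x ⊓ y ≤ y ⊓ w) : treeRel M x w := by
  have hxw : x ⊓ y ≤ x ⊓ w := le_inf inf_le_left (h.trans inf_le_right)
  rintro u hu (hux | huw)
  · exact hxy u (hxw.trans_lt hu) (Or.inl hux)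
  · by_cases huy : u ≤ y ⊓ w
    · exact hxy u (hxw.trans_lt hu) (Or.inr (huy.trans inf_le_left))
    · exact hyw u (ht.lt_of_not_le huw inf_le_right huy) (Or.inr huw)

theorem treeRel_trans {w : α} (hxy : treeRel M x y) (hyw : treeRel M y w) :
    treeRel M x w := by
  rcases ht (inf_le_right : x ⊓ y ≤ y) (inf_le_left : y ⊓ w ≤ y) with h | h
  · exact ht.treeRel_trans_of_inf_le hxy hyw h
  · refine treeRel_symm (ht.treeRel_trans_of_inf_le (treeRel_symm hyw) (treeRel_symm hxy) ?_)
    simpa only [inf_comm] using h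

theorem treeRel_inf_right (h : treeRel M x y) (c : α) : treeRel M (x ⊓ c) (y ⊓ c) := by
  have key : ∀ {a b}, treeRel M a b → ∀ u, a ⊓ b ⊓ c < u → u ≤ a ⊓ c → u ∈ M := by
    intro a b hab u hu hua
    refine hab u (ht.lt_of_not_le (hua.trans inf_le_left) inf_le_left fun hu' => ?_)
      (Or.inl (hua.trans inf_le_left))
    exact hu.not_ge (le_inf hu' (hua.trans inf_le_right))
  have hinf : x ⊓ c ⊓ (y ⊓ c) = x ⊓ y ⊓ c := (inf_inf_distrib_right x y c).symm
  rintro u hu (hu' | hu')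
  · exact key h u (hinf ▸ hu) hu'
  · exact key (treeRel_symm h) u (inf_comm x y ▸ hinf ▸ hu) hu'

def meetCong (M : Set α) : MeetCong α :=
  ⟨⟨treeRel M, treeRel_refl, treeRel_symm, ht.treeRel_trans⟩, fun a b c d h₁ h₂ =>
    ht.treeRel_trans (ht.treeRel_inf_right h₁ c) (by
      simpa only [inf_comm b] using ht.treeRel_inf_right h₂ b)⟩

theorem meetCong_rel_iff {p : α} (hp : IsGreatest (Iio z) p) :
    (ht.meetCong M).1 z p ↔ z ∈ M := by
  have hinf : z ⊓ p = p := inf_eq_right.2 (le_of_lt hp.1)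
  refine ⟨fun h => h z (by rw [hinf]; exact hp.1) (Or.inl le_rfl), fun hz u hu hle => ?_⟩
  rw [hinf] at hu
  rcases hle with hle | hle
  · rcases hle.eq_or_lt with rfl | hlt
    · exact hz
    · exact absurd (hp.2 hlt) hu.not_ge
  · exact absurd hle hu.not_ge

variable [Finite α]

theorem two_pow_le_card_separatesFromLowerCovers (E : Set α) :
    2 ^ (Nat.card α - 1) ≤
      2 ^ E.ncard * Nat.card {θ : MeetCong α // θ.SeparatesFromLowerCovers E} := by
  set N := {z : α | ¬IsMin z}
  set S := N \ E
  have hN : Nat.card α - 1 ≤ N.ncard := by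
    have hmin : Nᶜ.ncard ≤ 1 := (ncard_le_one).2 fun a ha b hb =>
      le_antisymm ((not_not.1 ha).isBot b) ((not_not.1 hb).isBot a)
    have := ncard_add_ncard_compl N
    omega
  have hS : N.ncard ≤ S.ncard + E.ncard := ncard_le_ncard_sdiff_add_ncard N E
  let F : Set S → {θ : MeetCong α // θ.SeparatesFromLowerCovers E} := fun M =>
    ⟨ht.meetCong (Subtype.val '' M), fun e he p hp hrel => by
      obtain ⟨z, -, rfl⟩ := (ht.meetCong_rel_iff hp).1 hrel
      exact z.2.2 he⟩
  have hF : F.Injective := by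
    intro M₁ M₂ h
    ext ⟨z, hz⟩
    obtain ⟨p, hp⟩ := ht.exists_isGreatest_Iio hz.1
    rw [← Subtype.val_injective.mem_set_image, ← Subtype.val_injective.mem_set_image,
      ← ht.meetCong_rel_iff hp, ← ht.meetCong_rel_iff hp]
    exact Iff.of_eq (congrArg (fun θ : MeetCong α => θ.1 z p) (congrArg Subtype.val h))
  calc 2 ^ (Nat.card α - 1) ≤ 2 ^ (E.ncard + S.ncard) := Nat.pow_le_pow_right two_pos (by omega)
    _ = 2 ^ E.ncard * Nat.card (Set S) := by rw [pow_add, Nat.card_set, Nat.card_coe_set_eq]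
    _ ≤ _ := Nat.mul_le_mul_left _ (Nat.card_le_card_of_injective F hF)

theorem two_pow_le_card_meetCong : 2 ^ (Nat.card α - 1) ≤ Nat.card (MeetCong α) := by
  have h := ht.two_pow_le_card_separatesFromLowerCovers ∅
  rw [ncard_empty, pow_zero, one_mul] at h
  exact h.trans (Finite.card_subtype_le _)

end IsTree

section DeleteMax

variable [SemilatticeInf α] {m : α} [hm : Fact (IsMax m)]

instance : SemilatticeInf {x : α // x ≠ m} :=
  Subtype.semilatticeInf fun _ y hx _ => hm.out.inf_ne hx y

theorem exists_pair_below_of_not_isTree (hβ : IsTree {x : α // x ≠ m}) (hα : ¬IsTree α) :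
    ∃ x y : α, x ≠ m ∧ y ≠ m ∧ x ≤ m ∧ y ≤ m ∧ ∀ z, x ≤ z → y ≤ z → z = m := by
  simp only [IsTree, not_forall, not_or] at hα
  obtain ⟨x, y, z, hxz, hyz, hxy, hyx⟩ := hα
  have hx : x ≠ m := by
    rintro rfl
    exact hyx (hyz.trans (hm.out hxz))
  have hy : y ≠ m := by
    rintro rfl
    exact hxy (hxz.trans (hm.out hyz))
  have hub : ∀ w, x ≤ w → y ≤ w → w = m := fun w hxw hyw => by
    by_contra hw
    exact (hβ (z := ⟨w, hw⟩) (x := ⟨x, hx⟩) (y := ⟨y, hy⟩) hxw hyw).elim hxy hyx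
  exact ⟨x, y, hx, hy, hub z hxz hyz ▸ hxz, hub z hxz hyz ▸ hyz, hub⟩

namespace MeetCong

variable (m) in
def restrict (θ : MeetCong α) : MeetCong {x : α // x ≠ m} :=
  θ.comap ⟨Subtype.val, fun _ _ => rfl⟩

variable {θ ψ θ₁ θ₂ : MeetCong α} {x y : α}

theorem rel_iff_of_restrict_eq (h : θ₁.restrict m = θ₂.restrict m) (hx : x ≠ m) (hy : y ≠ m) :
    θ₁.1 x y ↔ θ₂.1 x y :=
  Iff.of_eq (congrArg (fun θ : MeetCong _ => θ.1 ⟨x, hx⟩ ⟨y, hy⟩) h)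

/-- With `s = x ⊓ m` and `a < m` related to `m` by `ψ`: `θ` relates `s ⊓ a` to `a`, a pair avoiding
`m` on which `θ` and `ψ` agree, and from it `ψ` recovers `s ~ m` because `ψ` relates `a` to `m`. -/
theorem rel_of_restrict_eq_of_not_isolates (h : θ.restrict m = ψ.restrict m)
    (hψ : ¬ψ.Isolates m) (hx : x ≠ m) (hθ : θ.1 x m) : ψ.1 x m := by
  obtain ⟨a₀, ha₀, ha₀m⟩ : ∃ a, ψ.1 a m ∧ a ≠ m := by simpa [Isolates] using hψ
  set a := a₀ ⊓ m
  set s := x ⊓ m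
  have ham : a ≠ m := hm.out.inf_ne ha₀m m
  have hsm : s ≠ m := hm.out.inf_ne hx m
  have ham_le : a ≤ m := inf_le_right
  have hsm_le : s ≤ m := inf_le_right
  have hψa : ψ.1 a m := by simpa using ψ.rel_inf_right ha₀ m
  have hθxs : θ.1 x s := by simpa only [inf_idem, inf_comm m x] using θ.rel_inf_right hθ x
  have hθsa : θ.1 (s ⊓ a) a := by
    simpa only [inf_eq_right.2 ham_le]
      using θ.rel_inf_right (θ.1.trans' (θ.1.symm' hθxs) hθ) a
  have hψsa : ψ.1 (s ⊓ a) a := (rel_iff_of_restrict_eq h (hm.out.inf_ne hsm a) ham).1 hθsa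
  have hψs : ψ.1 s (s ⊓ a) := by
    simpa only [inf_eq_right.2 hsm_le, inf_comm a s]
      using ψ.1.symm' (ψ.rel_inf_right hψa s)
  have hψx : ψ.1 x s := (rel_iff_of_restrict_eq h hx hsm).1 hθxs
  exact ψ.1.trans' hψx (ψ.1.trans' hψs (ψ.1.trans' hψsa hψa))

theorem eq_of_restrict_eq (h : θ₁.restrict m = θ₂.restrict m)
    (hiso : θ₁.Isolates m ↔ θ₂.Isolates m) : θ₁ = θ₂ := by
  have hm_rel : ∀ x, θ₁.1 x m ↔ θ₂.1 x m := by
    intro x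
    rcases eq_or_ne x m with rfl | hx
    · exact iff_of_true (θ₁.1.refl' x) (θ₂.1.refl' x)
    by_cases h₁ : θ₁.Isolates m
    · exact iff_of_false (fun hr => hx (h₁ x hr)) fun hr => hx (hiso.1 h₁ x hr)
    · exact ⟨rel_of_restrict_eq_of_not_isolates h (hiso.not.1 h₁) hx,
        rel_of_restrict_eq_of_not_isolates h.symm h₁ hx⟩
  refine Subtype.ext (Setoid.ext fun x y => ?_)
  rcases eq_or_ne y m with rfl | hy
  · exact hm_rel x
  rcases eq_or_ne x m with rfl | hx
  · exact θ₁.1.comm'.trans ((hm_rel y).trans θ₂.1.comm')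
  exact rel_iff_of_restrict_eq h hx hy

variable [Finite α]

theorem card_le_card_restrict_add (S : Set (MeetCong {x : α // x ≠ m}))
    (hS : ∀ θ : MeetCong α, ¬θ.Isolates m → θ.restrict m ∈ S) :
    Nat.card (MeetCong α) ≤ Nat.card (MeetCong {x : α // x ≠ m}) + S.ncard := by
  classical
  let F : MeetCong α → MeetCong {x : α // x ≠ m} ⊕ S := fun θ =>
    if hθ : θ.Isolates m then .inl (θ.restrict m) else .inr ⟨θ.restrict m, hS θ hθ⟩
  have hF : F.Injective := by
    intro θ₁ θ₂ h
    by_cases h₁ : θ₁.Isolates m <;> by_cases h₂ : θ₂.Isolates m <;>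
      simp only [F, h₁, h₂, dite_true, dite_false, Sum.inl.injEq, Sum.inr.injEq, reduceCtorEq,
        Subtype.mk.injEq] at h
    · exact eq_of_restrict_eq h (iff_of_true h₁ h₂)
    · exact eq_of_restrict_eq h (iff_of_false h₁ h₂)
  rw [← Nat.card_coe_set_eq, ← Nat.card_sum]
  exact Nat.card_le_card_of_injective F hF

theorem card_le_two_mul_card_restrict :
    Nat.card (MeetCong α) ≤ 2 * Nat.card (MeetCong {x : α // x ≠ m}) := by
  simpa [two_mul] using card_le_card_restrict_add (m := m) univ fun _ _ => trivial

theorem not_separatesFromLowerCovers_restrict (hβ : IsTree {x : α // x ≠ m})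
    (hθ : ¬θ.Isolates m) {x y : {x : α // x ≠ m}} (hx : (x : α) ≤ m) (hy : (y : α) ≤ m)
    (hub : ∀ z, (x : α) ≤ z → (y : α) ≤ z → z = m) :
    ¬(θ.restrict m).SeparatesFromLowerCovers {x, y} := by
  obtain ⟨a, ha, ham⟩ : ∃ a, θ.1 a m ∧ a ≠ m := by simpa [Isolates] using hθ
  have key : ∀ e : {x : α // x ≠ m}, (e : α) ≤ m → ¬(e : α) ≤ a →
      ∃ p, IsGreatest (Iio e) p ∧ (θ.restrict m).1 e p := by
    intro e hem hea
    let c : {x : α // x ≠ m} := ⟨a ⊓ e, hm.out.inf_ne ham e⟩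
    have hce : c < e := lt_of_le_of_ne inf_le_right fun h => hea (h ▸ inf_le_left)
    have hrel : θ.1 (a ⊓ e) e := by simpa only [inf_eq_right.2 hem] using θ.rel_inf_right ha e
    obtain ⟨p, hp⟩ := hβ.exists_isGreatest_Iio (not_isMin_iff.2 ⟨c, hce⟩)
    exact ⟨p, hp, (θ.restrict m).rel_of_isGreatest_Iio hrel hce hp⟩
  intro hsep
  by_cases hxa : (x : α) ≤ a
  · obtain ⟨p, hp, hrel⟩ := key y hy fun hya => ham (hub a hxa hya)
    exact hsep y (by simp) p hp hrel
  · obtain ⟨p, hp, hrel⟩ := key x hx hxa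
    exact hsep x (by simp) p hp hrel

theorem four_mul_card_add_two_pow_le (hβ : IsTree {x : α // x ≠ m}) (hα : ¬IsTree α) :
    4 * Nat.card (MeetCong α) + 2 ^ (Nat.card {x : α // x ≠ m} - 1) ≤
      8 * Nat.card (MeetCong {x : α // x ≠ m}) := by
  obtain ⟨x, y, hxm, hym, hx, hy, hub⟩ := exists_pair_below_of_not_isTree hβ hα
  set E : Set {x : α // x ≠ m} := {⟨x, hxm⟩, ⟨y, hym⟩}
  set T := {θ : MeetCong {x : α // x ≠ m} | θ.SeparatesFromLowerCovers E}
  have hcard := card_le_card_restrict_add Tᶜ fun θ hθ =>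
    not_separatesFromLowerCovers_restrict hβ hθ hx hy hub
  have hsplit := ncard_add_ncard_compl T
  rw [← Nat.card_coe_set_eq T] at hsplit
  have hT : 2 ^ (Nat.card {x : α // x ≠ m} - 1) ≤ 2 ^ E.ncard * Nat.card T :=
    hβ.two_pow_le_card_separatesFromLowerCovers E
  have hE : 2 ^ E.ncard ≤ 2 ^ 2 :=
    Nat.pow_le_pow_right two_pos ((ncard_insert_le _ _).trans (by rw [ncard_singleton]))
  have := Nat.mul_le_mul_right (Nat.card T) hE
  omega

end MeetCong

end DeleteMax

namespace MeetCong

variable [SemilatticeInf α] [Finite α]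

theorem card_le_two_pow : Nat.card (MeetCong α) ≤ 2 ^ (Nat.card α - 1) := by
  induction hn : Nat.card α using Nat.strong_induction_on generalizing α with
  | _ n ih =>
  rcases subsingleton_or_nontrivial α with hα | hα
  · exact Finite.card_le_one_iff_subsingleton.2 inferInstance |>.trans Nat.one_le_two_pow
  obtain ⟨m, hm⟩ := Finite.exists_isMax (α := α)
  have : Fact (IsMax m) := ⟨hm⟩
  have hcard := Nat.card_subtype_ne_add_one m
  have h2 : 2 ≤ n := hn ▸ Finite.one_lt_card
  obtain ⟨k, rfl⟩ : ∃ k, n = k + 2 := ⟨n - 2, by omega⟩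
  have ih' := ih (k + 1) (by omega) (α := {x : α // x ≠ m}) (by omega)
  have := card_le_two_mul_card_restrict (m := m)
  rw [Nat.add_sub_cancel] at ih'
  rw [show k + 2 - 1 = k + 1 by omega, pow_succ]
  omega

theorem card_le_of_not_isTree (hα : ¬IsTree α) :
    16 * Nat.card (MeetCong α) ≤ 7 * 2 ^ Nat.card α := by
  induction hn : Nat.card α using Nat.strong_induction_on generalizing α with
  | _ n ih =>
  have : Nontrivial α := not_subsingleton_iff_nontrivial.1 fun _ => hα IsTree.of_subsingleton
  obtain ⟨m, hm⟩ := Finite.exists_isMax (α := α)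
  have : Fact (IsMax m) := ⟨hm⟩
  have hcard := Nat.card_subtype_ne_add_one m
  have h2 : 2 ≤ n := hn ▸ Finite.one_lt_card
  obtain ⟨k, rfl⟩ : ∃ k, n = k + 2 := ⟨n - 2, by omega⟩
  have hβ : Nat.card {x : α // x ≠ m} = k + 1 := by omega
  have hrestrict := card_le_two_mul_card_restrict (m := m)
  rw [pow_add]
  by_cases ht : IsTree {x : α // x ≠ m}
  · have h₁ := four_mul_card_add_two_pow_le ht hα
    have h₂ := card_le_two_pow (α := {x : α // x ≠ m})
    rw [hβ, Nat.add_sub_cancel] at h₁ h₂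
    omega
  · have h₁ := ih (k + 1) (by omega) ht hβ
    rw [pow_succ] at h₁
    omega

end MeetCong

theorem numCong_second_gap_general {α : Type*} [SemilatticeInf α] [Fintype α]
    (h : numCong α < 2 ^ (Fintype.card α - 1)) :
    2 ^ 6 * numCong α ≤ 28 * 2 ^ Fintype.card α := by
  change Nat.card (MeetCong α) < 2 ^ (Fintype.card α - 1) at h
  change 2 ^ 6 * Nat.card (MeetCong α) ≤ _
  rw [← Nat.card_eq_fintype_card] at h ⊢
  have hα : ¬IsTree α := fun ht => h.not_ge ht.two_pow_le_card_meetCong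
  have := MeetCong.card_le_of_not_isTree hα
  omega

/-- If an n-element meet-semilattice has fewer than 2^(n-1) congruences, then it
has at most 28·2^(n-6) congruences (stated multiplied through by 2^6). -/
theorem numCong_second_gap {α : Type*} [SemilatticeInf α] [Fintype α]
    (hn : 2 ≤ Fintype.card α)
    (h : numCong α < 2 ^ (Fintype.card α - 1)) :
    2 ^ 6 * numCong α ≤ 28 * 2 ^ Fintype.card α :=
  numCong_second_gap_general h
end

section
/- For every n-element lattice L, the number of lattice congruences satisfies |Con(L)| ≤ 2^{n-1}, with equality if and only if L is a chain. -/
def IsLatCong {α : Type*} [Lattice α] (s : Setoid α) : Prop :=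
  ∀ a b c d : α, s.r a b → s.r c d → s.r (a ⊓ c) (b ⊓ d) ∧ s.r (a ⊔ c) (b ⊔ d)

/-!
Every class of a congruence of a finite lattice is closed under `⊓`, so it has a least element,
and the minimum of the class of `x` is the largest class minimum below `x` (if `a` is a class
minimum and `a ≤ x ≡ m`, then `a = a ⊓ x ≡ a ⊓ m` forces `a ≤ m`). Hence a congruence is
determined by its set `M` of class minima, which contains `⊥`, and there are at most `2 ^ (n - 1)`
congruences. The same argument shows that `M` is closed under `⊔`, so if `a` and `b` are
incomparable then `M` is never the complement of `{a ⊔ b}` and the bound is strict. In a chain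
every `M ∋ ⊥` occurs: identify `x` and `y` when the same elements of `M` lie below them.
-/

theorem IsLatCong.isMeetCong {α : Type*} [Lattice α] {s : Setoid α} (hs : IsLatCong s) :
    IsMeetCong s :=
  fun a b c d hab hcd => (hs a b c d hab hcd).1

theorem Nat.card_lt_card_of_injective_of_notMem {α β : Type*} [Finite β] (f : α → β)
    (hf : Function.Injective f) {b : β} (hb : b ∉ Set.range f) : Nat.card α < Nat.card β :=
  Nat.card_range_of_injective hf ▸ Finite.card_subtype_lt hb

theorem le_sup_iff_of_total {α : Type*} [Lattice α] (htot : ∀ a b : α, a ≤ b ∨ b ≤ a)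
    {a b c : α} : a ≤ b ⊔ c ↔ a ≤ b ∨ a ≤ c := by
  refine ⟨fun h => ?_, fun h => h.elim le_sup_of_le_left le_sup_of_le_right⟩
  rcases htot b c with hbc | hcb
  · exact Or.inr (h.trans (sup_eq_right.mpr hbc).le)
  · exact Or.inl (h.trans (sup_eq_left.mpr hcb).le)

namespace Setoid

variable {α : Type*} [SemilatticeInf α] [Fintype α] {s : Setoid α} {x y : α}

open scoped Classical in
noncomputable def classMin (s : Setoid α) (x : α) : α :=
  (Finset.univ.filter (s.r x)).inf' ⟨x, Finset.mem_filter.mpr ⟨Finset.mem_univ x, s.refl x⟩⟩ id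

theorem classMin_le (h : s.r x y) : s.classMin x ≤ y := by
  classical
  exact Finset.inf'_le id (by simpa using h)

theorem classMin_le_self (s : Setoid α) (x : α) : s.classMin x ≤ x :=
  classMin_le (s.refl x)

theorem classMin_eq_of_rel (h : s.r x y) : s.classMin x = s.classMin y := by
  classical
  refine Finset.inf'_congr _ (Finset.ext fun z => ?_) fun _ _ => rfl
  simpa using ⟨s.trans (s.symm h), s.trans h⟩

theorem classMin_bot [OrderBot α] (s : Setoid α) : s.classMin ⊥ = ⊥ :=
  le_bot_iff.mp (s.classMin_le_self ⊥)

noncomputable def classMins [OrderBot α] (s : Setoid α) : Set {x : α // x ≠ ⊥} :=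
  {x | s.classMin x = x}

end Setoid

namespace IsMeetCong

open Setoid

section SemilatticeInf

variable {α : Type*} [SemilatticeInf α] [Fintype α] {s t : Setoid α} {x z : α}

theorem rel_classMin (hs : IsMeetCong s) (x : α) : s.r x (s.classMin x) := by
  classical
  refine Finset.inf'_mem {y | s.r x y} (fun y hy y' hy' => ?_) _ _ _ fun y hy => by simpa using hy
  simpa using hs x y x y' hy hy'

theorem rel_iff_classMin_eq (hs : IsMeetCong s) {x y : α} :
    s.r x y ↔ s.classMin x = s.classMin y :=
  ⟨classMin_eq_of_rel, fun h => s.trans (hs.rel_classMin x) (h ▸ s.symm (hs.rel_classMin y))⟩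

theorem classMin_classMin (hs : IsMeetCong s) (x : α) : s.classMin (s.classMin x) = s.classMin x :=
  (classMin_eq_of_rel (hs.rel_classMin x)).symm

theorem le_classMin (hs : IsMeetCong s) (hz : s.classMin z = z) (hzx : z ≤ x) :
    z ≤ s.classMin x := by
  have h : s.r z (z ⊓ s.classMin x) := by
    simpa [inf_eq_left.mpr hzx] using hs z z x _ (s.refl z) (hs.rel_classMin x)
  exact (hz ▸ classMin_le h).trans inf_le_right

theorem classMin_le_classMin (hs : IsMeetCong s) (ht : IsMeetCong t)
    (h : ∀ x, t.classMin x = x → s.classMin x = x) (x : α) : t.classMin x ≤ s.classMin x :=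
  hs.le_classMin (h _ (ht.classMin_classMin x)) (classMin_le_self t x)

theorem eq_of_classMin_fixed_iff (hs : IsMeetCong s) (ht : IsMeetCong t)
    (h : ∀ x, s.classMin x = x ↔ t.classMin x = x) : s = t := by
  have heq (x : α) : s.classMin x = t.classMin x :=
    (hs.classMin_le_classMin ht (fun x => (h x).mpr) x).antisymm'
      (ht.classMin_le_classMin hs (fun x => (h x).mp) x)
  ext x y
  rw [hs.rel_iff_classMin_eq, ht.rel_iff_classMin_eq, heq, heq]

end SemilatticeInf

section Lattice

variable {α : Type*} [Lattice α] [Fintype α] {s : Setoid α}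

theorem classMin_sup (hs : IsMeetCong s) {a b : α} (ha : s.classMin a = a)
    (hb : s.classMin b = b) : s.classMin (a ⊔ b) = a ⊔ b :=
  (classMin_le_self s _).antisymm <|
    sup_le (hs.le_classMin ha le_sup_left) (hs.le_classMin hb le_sup_right)

end Lattice

end IsMeetCong

namespace Setoid

variable {α : Type*}

theorem classMins_injOn [SemilatticeInf α] [Fintype α] [OrderBot α] :
    Set.InjOn classMins {s : Setoid α | IsMeetCong s} := by
  intro s hs t ht h
  refine IsMeetCong.eq_of_classMin_fixed_iff hs ht fun x => ?_
  rcases eq_or_ne x ⊥ with rfl | hx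
  · simp [classMin_bot]
  · exact Set.ext_iff.mp h ⟨x, hx⟩

theorem classMins_ne_sup_compl [Lattice α] [Fintype α] [OrderBot α] {s : Setoid α}
    (hs : IsMeetCong s) {a b : α} (hab : ¬a ≤ b) (hba : ¬b ≤ a) :
    s.classMins ≠ {x | x.1 ≠ a ⊔ b} := by
  intro h
  have hmin {c : α} (hc : c ≠ ⊥) (hcv : c ≠ a ⊔ b) : s.classMin c = c :=
    (Set.ext_iff.mp h ⟨c, hc⟩).mpr hcv
  have ha : a ≠ ⊥ := fun h => hab (h ▸ bot_le)
  have hb : b ≠ ⊥ := fun h => hba (h ▸ bot_le)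
  have hsup := hs.classMin_sup (hmin ha fun h => hba (h ▸ le_sup_right))
    (hmin hb fun h => hab (h ▸ le_sup_left))
  exact (Set.ext_iff.mp h ⟨a ⊔ b, fun h => ha (le_bot_iff.mp (h ▸ le_sup_left))⟩).mp hsup rfl

def cut [Preorder α] (S : Set α) : Setoid α :=
  ker fun x => {z ∈ S | z ≤ x}

theorem cut_rel_iff [Preorder α] {S : Set α} {x y : α} :
    (cut S).r x y ↔ ∀ z ∈ S, z ≤ x ↔ z ≤ y :=
  Set.ext_iff.trans (forall_congr' fun _ => and_congr_right_iff)

theorem isLatCong_cut [Lattice α] (htot : ∀ a b : α, a ≤ b ∨ b ≤ a) (S : Set α) :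
    IsLatCong (cut S) := by
  intro a b c d hab hcd
  rw [cut_rel_iff] at hab hcd
  rw [cut_rel_iff, cut_rel_iff]
  refine ⟨fun z hz => ?_, fun z hz => ?_⟩
  · rw [le_inf_iff, le_inf_iff, hab z hz, hcd z hz]
  · rw [le_sup_iff_of_total htot, le_sup_iff_of_total htot, hab z hz, hcd z hz]

theorem cut_rel_iff_of_covBy [PartialOrder α] (htot : ∀ a b : α, a ≤ b ∨ b ≤ a) (S : Set α)
    {w x : α} (hwx : w ⋖ x) : (cut S).r x w ↔ x ∉ S := by
  rw [cut_rel_iff]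
  refine ⟨fun h hx => hwx.lt.not_ge ((h x hx).mp le_rfl), fun hx z hz => ?_⟩
  refine ⟨fun hzx => ?_, fun hzw => hzw.trans hwx.le⟩
  have hzx : z < x := hzx.lt_of_ne (ne_of_mem_of_not_mem hz hx)
  by_contra hzw
  exact hwx.2 (((htot z w).resolve_left hzw).lt_of_not_ge hzw) hzx

theorem mem_iff_of_cut_eq [PartialOrder α] [Finite α] (htot : ∀ a b : α, a ≤ b ∨ b ≤ a)
    {S T : Set α} (h : cut S = cut T) {x : α} (hx : ¬IsMin x) : x ∈ S ↔ x ∈ T := by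
  obtain ⟨y, hyx⟩ := not_isMin_iff.mp hx
  obtain ⟨w, -, hwx⟩ := exists_le_covBy_of_lt hyx
  rw [← not_iff_not, ← cut_rel_iff_of_covBy htot S hwx, ← cut_rel_iff_of_covBy htot T hwx, h]

end Setoid

/-- An n-element lattice has at most 2^(n-1) congruences, with equality iff it
is a chain. -/
theorem lattice_numCong_le {α : Type*} [Lattice α] [Fintype α]
    (hn : 1 ≤ Fintype.card α) :
    Nat.card {s : Setoid α // IsLatCong s} ≤ 2 ^ (Fintype.card α - 1) ∧
    (Nat.card {s : Setoid α // IsLatCong s} = 2 ^ (Fintype.card α - 1) ↔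
      ∀ a b : α, a ≤ b ∨ b ≤ a) := by
  classical
  have : Nonempty α := Fintype.card_pos_iff.mp hn
  let : OrderBot α := Fintype.toOrderBot α
  let mins (s : {s : Setoid α // IsLatCong s}) : Set {x : α // x ≠ ⊥} := s.1.classMins
  have hmins : Function.Injective mins := fun s t h =>
    Subtype.ext (Setoid.classMins_injOn s.2.isMeetCong t.2.isMeetCong h)
  have hcard : Nat.card (Set {x : α // x ≠ ⊥}) = 2 ^ (Fintype.card α - 1) := by
    rw [Nat.card_eq_fintype_card, Fintype.card_set, Fintype.card_subtype_compl,
      Fintype.card_subtype_eq]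
  have hle : Nat.card {s : Setoid α // IsLatCong s} ≤ 2 ^ (Fintype.card α - 1) :=
    hcard ▸ Nat.card_le_card_of_injective mins hmins
  refine ⟨hle, fun heq => ?_, fun htot => hle.antisymm ?_⟩
  · by_contra! hchain
    obtain ⟨a, b, hab, hba⟩ := hchain
    have hlt := Nat.card_lt_card_of_injective_of_notMem mins hmins (b := {x | x.1 ≠ a ⊔ b})
      (by rintro ⟨s, hs⟩; exact Setoid.classMins_ne_sup_compl s.2.isMeetCong hab hba hs)
    omega
  · have : Finite {s : Setoid α // IsLatCong s} := Finite.of_injective mins hmins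
    let cut (T : Set {x : α // x ≠ ⊥}) : {s : Setoid α // IsLatCong s} :=
      ⟨Setoid.cut (Subtype.val '' T), Setoid.isLatCong_cut htot _⟩
    refine hcard ▸ Nat.card_le_card_of_injective cut fun T T' h => Set.ext fun x => ?_
    rw [← Subtype.val_injective.mem_set_image, ← Subtype.val_injective.mem_set_image]
    exact Setoid.mem_iff_of_cut_eq htot (congrArg Subtype.val h) (isMin_iff_eq_bot.not.mpr x.2)
end

section
/- Let S be a finite meet-semilattice and X a convex subsemilattice of S with |X| ≥ 2 such that X × X is contained in the tree congruence of S. If X contains every upper-bounded two-element antichain {p, q} of S together with its join p ∨ q, then S is a quasi-tree semilattice with nucleus X. -/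
/-!
The relation "equal, or both in `X`" is a meet-congruence once `X` is a convex
subsemilattice containing every element of a ubta. Indeed, for `c, d ∈ X` and any `w`, either
`w ⊓ c = w ⊓ d`, or, say, `w ⊓ d ≰ c`; then `w ⊓ d ∈ X`, since it lies either between `c ⊓ d`
and `d` or in the ubta `{w ⊓ d, c ⊓ d}` bounded by `d`, and `w ⊓ c ∈ X` as well, being
`(w ⊓ d) ⊓ c` or by the symmetric argument. If `X` also contains the joins of ubtas, this
congruence contains the generators of the tree congruence, so the tree congruence has no
nonsingleton block other than `X`, while `X × X` lies inside it by assumption.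
-/

def blockSetoid {α : Type*} (X : Set α) : Setoid α where
  r a b := a = b ∨ (a ∈ X ∧ b ∈ X)
  iseqv := by
    refine ⟨fun _ => Or.inl rfl, ?_, ?_⟩
    · rintro a b (rfl | ⟨ha, hb⟩)
      exacts [Or.inl rfl, Or.inr ⟨hb, ha⟩]
    · rintro a b c (rfl | ⟨ha, hb⟩) (rfl | ⟨hb', hc⟩)
      exacts [Or.inl rfl, Or.inr ⟨hb', hc⟩, Or.inr ⟨ha, hb⟩, Or.inr ⟨ha, hc⟩]

section

variable {α : Type*} [SemilatticeInf α] [OrderBot α] {X : Set α}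

theorem inf_mem_of_not_inf_le
    (hmeet : ∀ x ∈ X, ∀ y ∈ X, x ⊓ y ∈ X)
    (hconv : ∀ x ∈ X, ∀ z ∈ X, ∀ y : α, x ≤ y → y ≤ z → y ∈ X)
    (hubta : ∀ p q : α, IsUbta p q → p ∈ X)
    {c d : α} (hc : c ∈ X) (hd : d ∈ X) {w : α} (hwd : ¬ w ⊓ d ≤ c) : w ⊓ d ∈ X := by
  by_cases hle : c ⊓ d ≤ w ⊓ d
  · exact hconv _ (hmeet c hc d hd) d hd _ hle inf_le_right
  · refine hubta _ (c ⊓ d) ⟨?_, ?_, ?_, hle, d, inf_le_right, inf_le_right⟩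
    · exact fun h => hwd (h ▸ bot_le)
    · exact fun h => hle (h ▸ bot_le)
    · exact fun h => hwd (h.trans inf_le_left)

theorem inf_eq_inf_or_mem
    (hmeet : ∀ x ∈ X, ∀ y ∈ X, x ⊓ y ∈ X)
    (hconv : ∀ x ∈ X, ∀ z ∈ X, ∀ y : α, x ≤ y → y ≤ z → y ∈ X)
    (hubta : ∀ p q : α, IsUbta p q → p ∈ X)
    {c d : α} (hc : c ∈ X) (hd : d ∈ X) (w : α) :
    w ⊓ c = w ⊓ d ∨ (w ⊓ c ∈ X ∧ w ⊓ d ∈ X) := by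
  have mem : ∀ {c d}, c ∈ X → d ∈ X → ¬ w ⊓ d ≤ c → w ⊓ d ∈ X :=
    fun hc hd => inf_mem_of_not_inf_le hmeet hconv hubta hc hd
  by_cases hwd : w ⊓ d ≤ c <;> by_cases hwc : w ⊓ c ≤ d
  · exact Or.inl (le_antisymm (le_inf inf_le_left hwc) (le_inf inf_le_left hwd))
  · have hwc' := mem hd hc hwc
    have hwd' : w ⊓ d ∈ X := by
      rw [← inf_eq_left.2 hwd, ← inf_right_comm]
      exact hmeet _ hwc' d hd
    exact Or.inr ⟨hwc', hwd'⟩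
  · have hwd' := mem hc hd hwd
    have hwc' : w ⊓ c ∈ X := by
      rw [← inf_eq_left.2 hwc, ← inf_right_comm]
      exact hmeet _ hwd' c hc
    exact Or.inr ⟨hwc', hwd'⟩
  · exact Or.inr ⟨mem hd hc hwc, mem hc hd hwd⟩

theorem isMeetCong_blockSetoid
    (hmeet : ∀ x ∈ X, ∀ y ∈ X, x ⊓ y ∈ X)
    (hconv : ∀ x ∈ X, ∀ z ∈ X, ∀ y : α, x ≤ y → y ≤ z → y ∈ X)
    (hubta : ∀ p q : α, IsUbta p q → p ∈ X) :
    IsMeetCong (blockSetoid X) := by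
  rintro a b c d (rfl | ⟨ha, hb⟩) (rfl | ⟨hc, hd⟩)
  · exact Or.inl rfl
  · exact inf_eq_inf_or_mem hmeet hconv hubta hc hd a
  · have h := inf_eq_inf_or_mem hmeet hconv hubta ha hb c
    rwa [inf_comm c a, inf_comm c b] at h
  · exact Or.inr ⟨hmeet a ha c hc, hmeet b hb d hd⟩

theorem treeCong_le_blockSetoid
    (hmeet : ∀ x ∈ X, ∀ y ∈ X, x ⊓ y ∈ X)
    (hconv : ∀ x ∈ X, ∀ z ∈ X, ∀ y : α, x ≤ y → y ≤ z → y ∈ X)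
    (hubta : ∀ p q : α, IsUbta p q →
      p ∈ X ∧ q ∈ X ∧ ∀ v : α, IsLUB {p, q} v → v ∈ X) :
    treeCong α ≤ blockSetoid X := by
  refine sInf_le ⟨isMeetCong_blockSetoid hmeet hconv fun p q h => (hubta p q h).1, ?_⟩
  intro a b v hab hv
  obtain ⟨ha, hb, hjoin⟩ := hubta a b hab
  exact Or.inr ⟨hmeet a ha b hb, hjoin v hv⟩

end

theorem nucleus_of_contains_ubtas_general {α : Type*} [SemilatticeInf α] [OrderBot α]
    (X : Set α)
    (hmeet : ∀ x ∈ X, ∀ y ∈ X, x ⊓ y ∈ X)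
    (hconv : ∀ x ∈ X, ∀ z ∈ X, ∀ y : α, x ≤ y → y ≤ z → y ∈ X)
    (hnontriv : ∃ x ∈ X, ∃ y ∈ X, x ≠ y)
    (htc : ∀ x ∈ X, ∀ y ∈ X, (treeCong α).r x y)
    (hubta : ∀ p q : α, IsUbta p q →
      p ∈ X ∧ q ∈ X ∧ ∀ v : α, IsLUB {p, q} v → v ∈ X) :
    IsNucleus X := by
  have hle : ∀ {a b}, (treeCong α).r a b → a = b ∨ (a ∈ X ∧ b ∈ X) :=
    fun h => treeCong_le_blockSetoid hmeet hconv hubta h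
  refine ⟨hnontriv, fun x hx y => ⟨htc x hx y, fun hxy => ?_⟩, fun a b hab hne => ?_⟩
  · rcases hle hxy with rfl | ⟨-, hy⟩
    exacts [hx, hy]
  · exact ((hle hab).resolve_left hne).1

/-- If a nontrivial convex subsemilattice X, with X × X inside the tree
congruence, contains every upper-bounded two-element antichain together with
its join, then S is a quasi-tree semilattice with nucleus X. -/
theorem nucleus_of_contains_ubtas {α : Type*} [SemilatticeInf α] [OrderBot α]
    [Fintype α] (X : Set α)
    (hmeet : ∀ x ∈ X, ∀ y ∈ X, x ⊓ y ∈ X)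
    (hconv : ∀ x ∈ X, ∀ z ∈ X, ∀ y : α, x ≤ y → y ≤ z → y ∈ X)
    (hnontriv : ∃ x ∈ X, ∃ y ∈ X, x ≠ y)
    (htc : ∀ x ∈ X, ∀ y ∈ X, (treeCong α).r x y)
    (hubta : ∀ p q : α, IsUbta p q →
      p ∈ X ∧ q ∈ X ∧ ∀ v : α, IsLUB {p, q} v → v ∈ X) :
    IsNucleus X :=
  nucleus_of_contains_ubtas_general X hmeet hconv hnontriv htc hubta
end

section
/- If a finite meet-semilattice S contains exactly two upper-bounded two-element antichains, {a, b} and {b, c}, such that v₁ := a∨b and v₂ := b∨c are incomparable, then S is a quasi-tree semilattice with nucleus F = {u, a, b, c, v₁, v₂}, where u = a∧b = a∧c = b∧c. -/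
/-!
Write `u = a ⊓ b`. Since `{a, b}` and `{b, c}` are the only ubtas, an element below `v₁` that is
incomparable with `a` or `b` must itself be `a` or `b`; hence everything below `v₁` lies in
`{a, b, v₁}` or below `u`, and symmetrically for `v₂`. This forces `a ⊓ b = a ⊓ c = b ⊓ c` and
shows that collapsing `F = {u, a, b, c, v₁, v₂}` to a point is a meet congruence identifying the
meet and join of every ubta. Conversely, every such congruence identifies `u` with `v₁` and `v₂`,
hence with everything in the intervals `[u, v₁]` and `[u, v₂]`, which cover `F`. So the tree
congruence is exactly the collapse of `F`.
-/

section

variable {α : Type*}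

theorem IsLUB.pair_le [Preorder α] {a b v z : α} (hv : IsLUB {a, b} v) (ha : a ≤ z) (hb : b ≤ z) :
    v ≤ z :=
  hv.2 (Set.forall_insert_of_forall (forall_eq.mpr hb) ha)

theorem Set.inf_eq_inf_of_pair_eq [SemilatticeInf α] {x y a b : α}
    (h : ({x, y} : Set α) = {a, b}) : x ⊓ y = a ⊓ b := by
  rcases Set.pair_eq_pair_iff.1 h with ⟨rfl, rfl⟩ | ⟨rfl, rfl⟩
  exacts [rfl, inf_comm _ _]

def collapseSetoid (X : Set α) : Setoid α where
  r x y := x = y ∨ (x ∈ X ∧ y ∈ X)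
  iseqv :=
    { refl _ := Or.inl rfl
      symm := by
        rintro x y (rfl | ⟨hx, hy⟩)
        exacts [Or.inl rfl, Or.inr ⟨hy, hx⟩]
      trans := by
        rintro x y z (rfl | ⟨hx, hy⟩) (rfl | ⟨hy', hz⟩)
        exacts [Or.inl rfl, Or.inr ⟨hy', hz⟩, Or.inr ⟨hx, hy⟩, Or.inr ⟨hx, hz⟩] }

theorem collapseSetoid_le {X : Set α} {s : Setoid α} {u : α} (h : ∀ x ∈ X, s.r u x) :
    collapseSetoid X ≤ s := by
  rintro x y (rfl | ⟨hx, hy⟩)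
  exacts [s.refl' x, s.trans' (s.symm' (h x hx)) (h y hy)]

section MeetCong

variable [SemilatticeInf α] {s : Setoid α}

theorem isMeetCong_of_inf_left (h : ∀ t x y, s.r x y → s.r (t ⊓ x) (t ⊓ y)) : IsMeetCong s := by
  intro x y z w hxy hzw
  have hw : s.r (x ⊓ w) (y ⊓ w) := by simpa only [inf_comm _ w] using h w x y hxy
  exact s.trans' (h x z w hzw) hw

theorem IsMeetCong.rel_of_le_of_le (hs : IsMeetCong s) {u v x : α} (huv : s.r u v)
    (hux : u ≤ x) (hxv : x ≤ v) : s.r u x := by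
  simpa only [inf_eq_left.2 hux, inf_eq_right.2 hxv] using hs u v x x huv (s.refl' x)

theorem isMeetCong_collapseSetoid {X : Set α} {u : α} (hu : IsLeast X u)
    (hdown : ∀ x ∈ X, ∀ m ≤ x, m ∈ X ∨ m ≤ u) : IsMeetCong (collapseSetoid X) := by
  have hmeet : ∀ t, ∀ x ∈ X, t ⊓ x ∈ X ∨ t ⊓ x = t ⊓ u := fun t x hx =>
    (hdown x hx (t ⊓ x) inf_le_right).imp_right fun hm =>
      le_antisymm (le_inf inf_le_left hm) (inf_le_inf_left t (hu.2 hx))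
  have hu_mem : ∀ t x, t ⊓ x ∈ X → t ⊓ u ∈ X := fun t x h => by
    rw [inf_eq_right.2 ((hu.2 h).trans inf_le_left)]
    exact hu.1
  refine isMeetCong_of_inf_left ?_
  rintro t x y (rfl | ⟨hx, hy⟩)
  · exact Or.inl rfl
  rcases hmeet t x hx with hx' | hx' <;> rcases hmeet t y hy with hy' | hy'
  · exact Or.inr ⟨hx', hy'⟩
  · exact Or.inr ⟨hx', hy' ▸ hu_mem t x hx'⟩
  · exact Or.inr ⟨hx' ▸ hu_mem t y hy', hy'⟩
  · exact Or.inl (hx'.trans hy'.symm)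

end MeetCong

section TreeCong

variable [SemilatticeInf α] [OrderBot α]

theorem isUbta_of_not_le {m x z : α} (hmx : ¬ m ≤ x) (hxm : ¬ x ≤ m) (hmz : m ≤ z)
    (hxz : x ≤ z) : IsUbta m x :=
  ⟨fun h => hmx (h ▸ bot_le), fun h => hxm (h ▸ bot_le), hmx, hxm, z, hmz, hxz⟩

theorem IsUbta.symm {x y : α} (h : IsUbta x y) : IsUbta y x :=
  let ⟨hx, hy, hxy, hyx, z, hxz, hyz⟩ := h
  ⟨hy, hx, hyx, hxy, z, hyz, hxz⟩

def CollapsesUbtas (s : Setoid α) : Prop :=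
  ∀ a b v : α, IsUbta a b → IsLUB {a, b} v → s.r (a ⊓ b) v

theorem treeCong_eq_collapseSetoid {X : Set α} {u : α} (hcong : IsMeetCong (collapseSetoid X))
    (hcoll : CollapsesUbtas (collapseSetoid X))
    (hrel : ∀ s : Setoid α, IsMeetCong s → CollapsesUbtas s → ∀ x ∈ X, s.r u x) :
    treeCong α = collapseSetoid X :=
  le_antisymm (sInf_le ⟨hcong, hcoll⟩)
    (le_sInf fun s ⟨hs, hs'⟩ => collapseSetoid_le (hrel s hs hs'))

theorem isNucleus_of_treeCong_eq {X : Set α} (h : treeCong α = collapseSetoid X) {x y : α}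
    (hx : x ∈ X) (hy : y ∈ X) (hxy : x ≠ y) : IsNucleus X := by
  rw [IsNucleus, h]
  refine ⟨⟨x, hx, y, hy, hxy⟩, fun x hx y => ⟨fun hy => Or.inr ⟨hx, hy⟩, ?_⟩,
    fun p q hpq hne => (hpq.resolve_left hne).1⟩
  rintro (rfl | ⟨-, hy⟩)
  exacts [hx, hy]

end TreeCong

structure IsTwoUbtaConfig [SemilatticeInf α] [OrderBot α] (a b c v₁ v₂ : α) : Prop where
  ubta_ab : IsUbta a b
  ubta_bc : IsUbta b c
  lub_ab : IsLUB {a, b} v₁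
  lub_bc : IsLUB {b, c} v₂
  not_le₁₂ : ¬ v₁ ≤ v₂
  not_le₂₁ : ¬ v₂ ≤ v₁
  pair_eq : ∀ x y : α, IsUbta x y → ({x, y} : Set α) = {a, b} ∨ ({x, y} : Set α) = {b, c}

namespace IsTwoUbtaConfig

variable [SemilatticeInf α] [OrderBot α] {a b c v₁ v₂ : α}

theorem symm (h : IsTwoUbtaConfig a b c v₁ v₂) : IsTwoUbtaConfig c b a v₂ v₁ where
  ubta_ab := h.ubta_bc.symm
  ubta_bc := h.ubta_ab.symm
  lub_ab := Set.pair_comm b c ▸ h.lub_bc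
  lub_bc := Set.pair_comm a b ▸ h.lub_ab
  not_le₁₂ := h.not_le₂₁
  not_le₂₁ := h.not_le₁₂
  pair_eq x y hxy := by
    rw [Set.pair_comm c b, Set.pair_comm b a]
    exact (h.pair_eq x y hxy).symm

theorem left_le (h : IsTwoUbtaConfig a b c v₁ v₂) : a ≤ v₁ := h.lub_ab.1 (by simp)

theorem mid_le (h : IsTwoUbtaConfig a b c v₁ v₂) : b ≤ v₁ := h.lub_ab.1 (by simp)

theorem not_left_le (h : IsTwoUbtaConfig a b c v₁ v₂) : ¬ a ≤ v₂ := fun ha =>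
  h.not_le₁₂ (h.lub_ab.pair_le ha h.symm.mid_le)

theorem mem_of_isUbta (h : IsTwoUbtaConfig a b c v₁ v₂) {x y : α} (hxy : IsUbta x y) :
    x = a ∨ x = b ∨ x = c := by
  have hx : x ∈ ({x, y} : Set α) := Set.mem_insert x _
  rcases h.pair_eq x y hxy with hp | hp <;> rw [hp] at hx <;> simp only [Set.mem_insert_iff,
    Set.mem_singleton_iff] at hx <;> tauto

theorem eq_or_eq_of_isUbta_of_le (h : IsTwoUbtaConfig a b c v₁ v₂) {m x : α} (hmx : IsUbta m x)
    (hm : m ≤ v₁) : m = a ∨ m = b := by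
  rcases h.mem_of_isUbta hmx with rfl | rfl | rfl
  · exact Or.inl rfl
  · exact Or.inr rfl
  · exact absurd hm h.symm.not_left_le

theorem eq_or_le_inf_of_le (h : IsTwoUbtaConfig a b c v₁ v₂) {m : α} (hm : m ≤ v₁) :
    m = a ∨ m = b ∨ m = v₁ ∨ m ≤ a ⊓ b := by
  obtain ⟨-, -, hab, hba, -⟩ := h.ubta_ab
  have partner_a : ¬ m ≤ a → ¬ a ≤ m → m = a ∨ m = b := fun hma ham =>
    h.eq_or_eq_of_isUbta_of_le (isUbta_of_not_le hma ham hm h.left_le) hm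
  have partner_b : ¬ m ≤ b → ¬ b ≤ m → m = a ∨ m = b := fun hmb hbm =>
    h.eq_or_eq_of_isUbta_of_le (isUbta_of_not_le hmb hbm hm h.mid_le) hm
  have below : m ≤ a → m ≤ b → m ≤ a ⊓ b := le_inf
  have above : a ≤ m → b ≤ m → m = v₁ := fun ham hbm => le_antisymm hm (h.lub_ab.pair_le ham hbm)
  have hba' : m ≤ a → ¬ b ≤ m := fun hma hbm => hba (hbm.trans hma)
  have hab' : m ≤ b → ¬ a ≤ m := fun hmb ham => hab (ham.trans hmb)
  tauto

theorem inf_left_mid_le_right (h : IsTwoUbtaConfig a b c v₁ v₂) : a ⊓ b ≤ c := by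
  have hba : ¬ b ≤ a := h.ubta_ab.2.2.2.1
  have hc : ¬ c ≤ v₁ := h.symm.not_left_le
  rcases h.symm.eq_or_le_inf_of_le (inf_le_right.trans h.symm.mid_le : a ⊓ b ≤ v₂)
    with heq | heq | heq | hle
  · exact absurd (heq ▸ inf_le_left.trans h.left_le) hc
  · exact absurd (heq ▸ inf_le_left) hba
  · exact absurd (h.symm.left_le.trans (heq ▸ inf_le_left.trans h.left_le)) hc
  · exact hle.trans inf_le_left

theorem inf_left_right_le_mid (h : IsTwoUbtaConfig a b c v₁ v₂) : a ⊓ c ≤ b := by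
  have hba : ¬ b ≤ a := h.ubta_ab.2.2.2.1
  rcases h.eq_or_le_inf_of_le (inf_le_left.trans h.left_le : a ⊓ c ≤ v₁)
    with heq | heq | heq | hle
  · exact absurd (heq ▸ inf_le_right.trans h.symm.left_le) h.not_left_le
  · exact absurd (heq ▸ inf_le_left) hba
  · exact absurd (heq ▸ inf_le_right.trans h.symm.left_le) h.not_le₁₂
  · exact hle.trans inf_le_right

theorem inf_left_mid_eq_inf_mid_right (h : IsTwoUbtaConfig a b c v₁ v₂) : a ⊓ b = b ⊓ c :=
  le_antisymm (le_inf inf_le_right h.inf_left_mid_le_right)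
    (le_inf (inf_comm b c ▸ h.symm.inf_left_mid_le_right) inf_le_left)

theorem inf_left_mid_eq_inf_left_right (h : IsTwoUbtaConfig a b c v₁ v₂) : a ⊓ b = a ⊓ c :=
  le_antisymm (le_inf inf_le_left h.inf_left_mid_le_right)
    (le_inf inf_le_left h.inf_left_right_le_mid)

theorem isLeast (h : IsTwoUbtaConfig a b c v₁ v₂) :
    IsLeast {a ⊓ b, a, b, c, v₁, v₂} (a ⊓ b) := by
  refine ⟨Set.mem_insert _ _, ?_⟩
  rintro x (rfl | rfl | rfl | rfl | rfl | rfl)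
  exacts [le_rfl, inf_le_left, inf_le_right, h.inf_left_mid_le_right,
    inf_le_left.trans h.left_le, inf_le_right.trans h.symm.mid_le]

theorem mem_or_le_inf_of_le (h : IsTwoUbtaConfig a b c v₁ v₂) {x m : α}
    (hx : x ∈ ({a ⊓ b, a, b, c, v₁, v₂} : Set α)) (hm : m ≤ x) :
    m ∈ ({a ⊓ b, a, b, c, v₁, v₂} : Set α) ∨ m ≤ a ⊓ b := by
  have hv : m ≤ v₁ ∨ m ≤ v₂ := by
    rcases hx with rfl | rfl | rfl | rfl | rfl | rfl
    exacts [Or.inl (hm.trans (inf_le_left.trans h.left_le)), Or.inl (hm.trans h.left_le),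
      Or.inl (hm.trans h.mid_le), Or.inr (hm.trans h.symm.left_le), Or.inl hm, Or.inr hm]
  rcases hv with hv | hv
  · rcases h.eq_or_le_inf_of_le hv with rfl | rfl | rfl | hle
    · simp
    · simp
    · simp
    · exact Or.inr hle
  · rcases h.symm.eq_or_le_inf_of_le hv with rfl | rfl | rfl | hle
    · simp
    · simp
    · simp
    · rw [inf_comm, ← h.inf_left_mid_eq_inf_mid_right] at hle
      exact Or.inr hle

theorem collapsesUbtas (h : IsTwoUbtaConfig a b c v₁ v₂) :
    CollapsesUbtas (collapseSetoid ({a ⊓ b, a, b, c, v₁, v₂} : Set α)) := by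
  intro x y v hxy hv
  refine Or.inr ⟨?_, ?_⟩ <;> rcases h.pair_eq x y hxy with hp | hp
  · rw [Set.inf_eq_inf_of_pair_eq hp]
    simp
  · rw [Set.inf_eq_inf_of_pair_eq hp, ← h.inf_left_mid_eq_inf_mid_right]
    simp
  · rw [hp] at hv
    simp [hv.unique h.lub_ab]
  · rw [hp] at hv
    simp [hv.unique h.lub_bc]

theorem rel_of_collapsesUbtas (h : IsTwoUbtaConfig a b c v₁ v₂) {s : Setoid α}
    (hs : IsMeetCong s) (hcoll : CollapsesUbtas s) :
    ∀ x ∈ ({a ⊓ b, a, b, c, v₁, v₂} : Set α), s.r (a ⊓ b) x := by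
  have h₁ : s.r (a ⊓ b) v₁ := hcoll a b v₁ h.ubta_ab h.lub_ab
  have h₂ : s.r (a ⊓ b) v₂ := h.inf_left_mid_eq_inf_mid_right ▸ hcoll b c v₂ h.ubta_bc h.lub_bc
  rintro x (rfl | rfl | rfl | rfl | rfl | rfl)
  exacts [s.refl' _, hs.rel_of_le_of_le h₁ inf_le_left h.left_le,
    hs.rel_of_le_of_le h₁ inf_le_right h.mid_le,
    hs.rel_of_le_of_le h₂ h.inf_left_mid_le_right h.symm.left_le, h₁, h₂]

theorem treeCong_eq (h : IsTwoUbtaConfig a b c v₁ v₂) :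
    treeCong α = collapseSetoid {a ⊓ b, a, b, c, v₁, v₂} :=
  treeCong_eq_collapseSetoid (isMeetCong_collapseSetoid h.isLeast fun _ hx _ hm =>
    h.mem_or_le_inf_of_le hx hm) h.collapsesUbtas fun _ hs hcoll => h.rel_of_collapsesUbtas hs hcoll

end IsTwoUbtaConfig

end

theorem twoUbta_F_general {α : Type*} [SemilatticeInf α] [OrderBot α]
    (a b c v₁ v₂ : α) (h1 : IsUbta a b) (h2 : IsUbta b c)
    (hv1 : IsLUB {a, b} v₁) (hv2 : IsLUB {b, c} v₂)
    (hv : ¬ v₁ ≤ v₂ ∧ ¬ v₂ ≤ v₁)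
    (huniq : ∀ x y : α, IsUbta x y →
      ({x, y} : Set α) = {a, b} ∨ ({x, y} : Set α) = {b, c}) :
    a ⊓ b = a ⊓ c ∧ a ⊓ b = b ⊓ c ∧
      IsNucleus ({a ⊓ b, a, b, c, v₁, v₂} : Set α) := by
  have h : IsTwoUbtaConfig a b c v₁ v₂ := ⟨h1, h2, hv1, hv2, hv.1, hv.2, huniq⟩
  have hab : a ≠ b := fun hab => h1.2.2.1 hab.le
  exact ⟨h.inf_left_mid_eq_inf_left_right, h.inf_left_mid_eq_inf_mid_right,
    isNucleus_of_treeCong_eq h.treeCong_eq (x := a) (y := b) (by simp) (by simp) hab⟩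

/-- A finite meet-semilattice with exactly two ubtas {a, b} and {b, c}, whose
joins v₁ = a∨b and v₂ = b∨c are incomparable, is a quasi-tree semilattice with
nucleus F = {u, a, b, c, v₁, v₂}, where u = a⊓b = a⊓c = b⊓c. -/
theorem twoUbta_F {α : Type*} [SemilatticeInf α] [OrderBot α] [Fintype α]
    (a b c v₁ v₂ : α) (h1 : IsUbta a b) (h2 : IsUbta b c)
    (hv1 : IsLUB {a, b} v₁) (hv2 : IsLUB {b, c} v₂)
    (hv : ¬ v₁ ≤ v₂ ∧ ¬ v₂ ≤ v₁)
    (huniq : ∀ x y : α, IsUbta x y →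
      ({x, y} : Set α) = {a, b} ∨ ({x, y} : Set α) = {b, c}) :
    a ⊓ b = a ⊓ c ∧ a ⊓ b = b ⊓ c ∧
      IsNucleus ({a ⊓ b, a, b, c, v₁, v₂} : Set α) :=
  twoUbta_F_general a b c v₁ v₂ h1 h2 hv1 hv2 hv huniq
end

section
/- The set of sizes of congruence lattices of 4-element meet-semilattices is exactly {8, 7}, i.e., every 4-element meet-semilattice has either 8 or 7 congruences and both values occur. -/
/-!
Along a linear extension `α ≃ Fin n` of the order, a congruence of `α` becomes a map
`c : Fin n → Fin n` sending each index to the least index of its class and compatible with the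
transported meet table. For `n = 4` the index `0` is the bottom, so the table is fixed by its three
entries `1 ⊓ 2`, `1 ⊓ 3`, `2 ⊓ 3`, and among the 64 candidates every associative decreasing table
admits `7` or `8` such maps.
-/

open Finset

section ClassMin

variable {n : ℕ}

-- `c` maps every index to the least index of its fibre, so `c` is determined by `Setoid.ker c`.
def IsClassMinMap (c : Fin n → Fin n) : Prop := ∀ i, c i ≤ i ∧ c (c i) = c i

instance : DecidablePred (IsClassMinMap (n := n)) := fun _ => by
  unfold IsClassMinMap; infer_instance

open Classical in
noncomputable def classMin (s : Setoid (Fin n)) (i : Fin n) : Fin n :=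
  (univ.filter (s · i)).min' ⟨i, mem_filter.mpr ⟨mem_univ i, s.refl i⟩⟩

theorem classMin_rel (s : Setoid (Fin n)) (i : Fin n) : s (classMin s i) i := by
  classical
  unfold classMin
  exact (mem_filter.mp (min'_mem (univ.filter (s · i)) _)).2

theorem classMin_le {s : Setoid (Fin n)} {i j : Fin n} (h : s j i) : classMin s i ≤ j := by
  classical
  unfold classMin
  exact min'_le _ _ (mem_filter.mpr ⟨mem_univ j, h⟩)

theorem classMin_eq_classMin_iff {s : Setoid (Fin n)} {i j : Fin n} :
    classMin s i = classMin s j ↔ s i j := by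
  constructor
  · intro h
    exact s.trans (s.symm (classMin_rel s i)) (by rw [h]; exact classMin_rel s j)
  · intro h
    exact le_antisymm (classMin_le (s.trans (classMin_rel s j) (s.symm h)))
      (classMin_le (s.trans (classMin_rel s i) h))

theorem isClassMinMap_classMin (s : Setoid (Fin n)) : IsClassMinMap (classMin s) := fun i =>
  ⟨classMin_le (s.refl i), classMin_eq_classMin_iff.mpr (classMin_rel s i)⟩

theorem classMin_ker {c : Fin n → Fin n} (hc : IsClassMinMap c) : classMin (Setoid.ker c) = c := by
  funext i
  apply le_antisymm
  · exact classMin_le (Setoid.ker_def.mpr (hc i).2)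
  · calc c i = c (classMin (Setoid.ker c) i) := (Setoid.ker_def.mp (classMin_rel _ i)).symm
      _ ≤ classMin (Setoid.ker c) i := (hc _).1

noncomputable def setoidEquivClassMinMap :
    Setoid (Fin n) ≃ {c : Fin n → Fin n // IsClassMinMap c} where
  toFun s := ⟨classMin s, isClassMinMap_classMin s⟩
  invFun c := Setoid.ker c.1
  left_inv _ := Setoid.ext fun _ _ => Setoid.ker_def.trans classMin_eq_classMin_iff
  right_inv c := Subtype.ext (classMin_ker c.2)

end ClassMin

def Setoid.comapEquiv {α β : Type*} (e : α ≃ β) : Setoid β ≃ Setoid α where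
  toFun := Setoid.comap e
  invFun := Setoid.comap e.symm
  left_inv _ := Setoid.ext fun _ _ => by simp [Setoid.comap_rel]
  right_inv _ := Setoid.ext fun _ _ => by simp [Setoid.comap_rel]

theorem exists_monotone_equiv_fin (α : Type*) [PartialOrder α] [Fintype α] {n : ℕ}
    (h : Fintype.card α = n) : ∃ e : α ≃ Fin n, Monotone e := by
  let _ : Fintype (LinearExtension α) := inferInstanceAs (Fintype α)
  let iso := monoEquivOfFin (LinearExtension α) h
  exact ⟨(Equiv.refl α).trans iso.symm.toEquiv,
    iso.symm.monotone.comp toLinearExtension.monotone⟩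

section Table

variable {α : Type*} [SemilatticeInf α] {n : ℕ}

def IsCongrMap (f : Fin n → Fin n → Fin n) (c : Fin n → Fin n) : Prop :=
  ∀ x y z w, c x = c y → c z = c w → c (f x z) = c (f y w)

instance (f : Fin n → Fin n → Fin n) : DecidablePred (IsCongrMap f) := fun _ => by
  unfold IsCongrMap; infer_instance

def congrCount (f : Fin n → Fin n → Fin n) : ℕ :=
  #{c : Fin n → Fin n | IsClassMinMap c ∧ IsCongrMap f c}

def infTable (e : α ≃ Fin n) (i j : Fin n) : Fin n :=
  e (e.symm i ⊓ e.symm j)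

theorem isMeetCong_iff_isCongrMap_classMin (e : α ≃ Fin n) (s : Setoid α) :
    IsMeetCong s ↔ IsCongrMap (infTable e) (classMin (Setoid.comap e.symm s)) := by
  simp only [IsCongrMap, classMin_eq_classMin_iff, Setoid.comap_rel, infTable,
    Equiv.symm_apply_apply]
  constructor
  · exact fun h x y z w => h _ _ _ _
  · intro h a b c d
    simpa using h (e a) (e b) (e c) (e d)

theorem numCong_eq_congrCount (e : α ≃ Fin n) : numCong α = congrCount (infTable e) := by
  let E := (Setoid.comapEquiv e.symm).trans setoidEquivClassMinMap
  rw [numCong, Nat.card_congr ((E.subtypeEquiv (isMeetCong_iff_isCongrMap_classMin e)).trans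
    (Equiv.subtypeSubtypeEquivSubtypeInter _ _)), Nat.card_eq_fintype_card, congrCount,
    Fintype.card_subtype]

variable (e : α ≃ Fin n)

theorem infTable_self (i : Fin n) : infTable e i i = i := by
  simp [infTable]

theorem infTable_comm (i j : Fin n) : infTable e i j = infTable e j i := by
  simp [infTable, inf_comm]

theorem infTable_assoc (i j k : Fin n) :
    infTable e (infTable e i j) k = infTable e i (infTable e j k) := by
  simp [infTable, inf_assoc]

variable {e} in
theorem infTable_le (he : Monotone e) (i j : Fin n) : infTable e i j ≤ i := by
  simpa [infTable] using he (inf_le_left (a := e.symm i) (b := e.symm j))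

end Table

def botTable (a b c : Fin 4) : Fin 4 → Fin 4 → Fin 4 :=
  ![![0, 0, 0, 0], ![0, 1, a, b], ![0, a, 2, c], ![0, b, c, 3]]

theorem eq_botTable (f : Fin 4 → Fin 4 → Fin 4) (hself : ∀ i, f i i = i)
    (hcomm : ∀ i j, f i j = f j i) (hle : ∀ i j, f i j ≤ i) :
    f = botTable (f 1 2) (f 1 3) (f 2 3) := by
  have hzero : ∀ j, f 0 j = 0 := fun j => Fin.le_zero_iff.mp (hle 0 j)
  funext i j
  fin_cases i <;> fin_cases j <;>
    first
      | exact hzero _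
      | exact hself _
      | exact hcomm _ _
      | exact (hcomm _ _).trans (hzero _)
      | rfl

theorem congrCount_botTable : ∀ a b c : Fin 4,
    (∀ i j k, botTable a b c (botTable a b c i j) k = botTable a b c i (botTable a b c j k)) →
    (∀ i j, botTable a b c i j ≤ i) →
    congrCount (botTable a b c) = 8 ∨ congrCount (botTable a b c) = 7 := by
  decide

theorem numCong_eq_eight_or_seven (α : Type*) [SemilatticeInf α] [Fintype α]
    (h : Fintype.card α = 4) : numCong α = 8 ∨ numCong α = 7 := by
  obtain ⟨e, he⟩ := exists_monotone_equiv_fin α h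
  have htable := eq_botTable (infTable e) (infTable_self e) (infTable_comm e) (infTable_le he)
  rw [numCong_eq_congrCount e, htable]
  exact congrCount_botTable _ _ _ (htable ▸ infTable_assoc e) (htable ▸ infTable_le he)

theorem numCong_fin_four : numCong (Fin 4) = 8 := by
  rw [numCong_eq_congrCount (Equiv.refl (Fin 4))]
  decide

theorem numCong_fin_two_prod_fin_two : numCong (Fin 2 × Fin 2) = 7 := by
  rw [numCong_eq_congrCount (finProdFinEquiv.trans (finCongr (by norm_num : 2 * 2 = 4)))]
  decide

/-- NCSL(4) = {8, 7}: every 4-element meet-semilattice has 8 or 7 congruences,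
and both values occur. -/
theorem ncsl_four :
    (∀ (α : Type) [SemilatticeInf α] [Fintype α],
      Fintype.card α = 4 → numCong α = 8 ∨ numCong α = 7) ∧
    (∃ (α : Type) (i : SemilatticeInf α) (j : Fintype α),
      @Fintype.card α j = 4 ∧ @numCong α i = 8) ∧
    (∃ (α : Type) (i : SemilatticeInf α) (j : Fintype α),
      @Fintype.card α j = 4 ∧ @numCong α i = 7) :=
  ⟨fun α _ _ => numCong_eq_eight_or_seven α,
    ⟨Fin 4, inferInstance, inferInstance, rfl, numCong_fin_four⟩,
    ⟨Fin 2 × Fin 2, inferInstance, inferInstance, by simp, numCong_fin_two_prod_fin_two⟩⟩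
end
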